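/- arXiv:1301.4871 — 9 statements merged into one kernel-verified Lean document; each statement's English description precedes it below -/
import Mathlib

section
/- For every integer r ≥ 1 there exists ε > 0 such that for all z ∈ ℂ with |z| < ε, writing x = z·exp(−z^r), the series Σ_{m=1}^∞ ((rm)^{m−2}/m!)·x^{rm} converges absolutely and equals z^r/r − z^{2r}/2. -/
/-!
Substituting `s = r z^r` turns the series into `r⁻² ∑_{m ≥ 1} m^(m-2)/m! (s e^(-s))^m`, so it
suffices to treat `r = 1`. Expanding each `e^(-ms)` into its power series gives a double series
that converges absolutely for small `s`. Regrouped by powers of `s`, the coefficient of `s^(k+1)`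
is `1/(k+1)!` times the `(k+1)`-th forward difference at `0` of `p ↦ p^(k-1)`, which vanishes for
`k ≥ 2`; only `s - s^2/2` survives.
-/

open Finset Filter Topology

theorem sum_antidiagonal_neg_one_pow_mul_choose_mul_pow_eq_zero {R : Type*} [CommRing R]
    {j n : ℕ} (h : j < n) :
    ∑ p ∈ antidiagonal n, (-1 : R) ^ p.2 * n.choose p.1 * (p.1 : R) ^ j = 0 := by
  have hdiff := congr_fun (fwdDiff_iter_pow_eq_zero_of_lt (R := R) h) 0
  rw [fwdDiff_iter_eq_sum_shift] at hdiff
  rw [Nat.sum_antidiagonal_eq_sum_range_succ (fun p q ↦ (-1 : R) ^ q * n.choose p * (p : R) ^ j)]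
  simpa [zsmul_eq_mul] using hdiff

theorem HasSum.sum_antidiagonal {α A : Type*} [AddCommMonoid α] [TopologicalSpace α]
    [ContinuousAdd α] [RegularSpace α] [AddCommMonoid A] [HasAntidiagonal A]
    {F : A × A → α} {S : α} (h : HasSum F S) :
    HasSum (fun n ↦ ∑ p ∈ antidiagonal n, F p) S :=
  (HasAntidiagonal.sigmaAntidiagonalEquivProd.hasSum_iff.mpr h).sigma fun n ↦ by
    rw [← sum_coe_sort]
    exact hasSum_fintype _

/-- `(m+1)^(m-1) / (m+1)!`, where `(m+1)^(m-1)` counts the labelled trees on `m + 1` vertices. -/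
noncomputable def cayleyCoeff (m : ℕ) : ℂ :=
  ((m + 1 : ℕ) : ℂ) ^ ((m : ℤ) - 1) / ((m + 1).factorial : ℂ)

/-- The terms of `cayleyCoeff n * (s * exp (-s)) ^ (n + 1)` expanded in powers of `s`. -/
noncomputable def cayleyFamily (s : ℂ) (p : ℕ × ℕ) : ℂ :=
  cayleyCoeff p.1 * (-((p.1 + 1 : ℕ) : ℂ)) ^ p.2 / (p.2.factorial : ℂ) * s ^ (p.1 + 1 + p.2)

theorem hasSum_cayleyFamily_fiber (s : ℂ) (n : ℕ) :
    HasSum (fun j ↦ cayleyFamily s (n, j))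
      (cayleyCoeff n * (s * Complex.exp (-s)) ^ (n + 1)) := by
  have hexp := NormedSpace.expSeries_div_hasSum_exp (-((n + 1 : ℕ) : ℂ) * s)
  rw [← Complex.exp_eq_exp_ℂ] at hexp
  have hterm : (fun j ↦ cayleyFamily s (n, j)) = fun j : ℕ ↦
      cayleyCoeff n * s ^ (n + 1) * ((-((n + 1 : ℕ) : ℂ) * s) ^ j / (j.factorial : ℂ)) := by
    ext j
    simp only [cayleyFamily, pow_add, mul_pow]
    ring
  have hsum : cayleyCoeff n * (s * Complex.exp (-s)) ^ (n + 1) =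
      cayleyCoeff n * s ^ (n + 1) * Complex.exp (-((n + 1 : ℕ) : ℂ) * s) := by
    rw [mul_pow, ← Complex.exp_nat_mul, mul_neg, neg_mul, mul_assoc]
  rw [hterm, hsum]
  exact hexp.mul_left _

theorem norm_cayleyCoeff_le (n : ℕ) : ‖cayleyCoeff n‖ ≤ Real.exp 1 ^ (n + 1) := by
  have h1 : (1 : ℝ) ≤ ((n + 1 : ℕ) : ℝ) := by exact_mod_cast Nat.le_add_left 1 n
  calc ‖cayleyCoeff n‖ = ((n + 1 : ℕ) : ℝ) ^ ((n : ℤ) - 1) / ((n + 1).factorial : ℝ) := by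
        simp only [cayleyCoeff, norm_div, norm_zpow, Complex.norm_natCast]
    _ ≤ ((n + 1 : ℕ) : ℝ) ^ (n + 1) / ((n + 1).factorial : ℝ) := by
        gcongr
        exact_mod_cast zpow_le_zpow_right₀ h1 (by omega : (n : ℤ) - 1 ≤ ((n + 1 : ℕ) : ℤ))
    _ ≤ Real.exp ((n + 1 : ℕ) : ℝ) := Real.pow_div_factorial_le_exp _ (Nat.cast_nonneg _) _
    _ = Real.exp 1 ^ (n + 1) := by rw [← Real.exp_nat_mul, mul_one]

theorem hasSum_norm_cayleyFamily_fiber (s : ℂ) (n : ℕ) :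
    HasSum (fun j ↦ ‖cayleyFamily s (n, j)‖)
      (‖cayleyCoeff n‖ * ‖s‖ ^ (n + 1) * Real.exp (((n + 1 : ℕ) : ℝ) * ‖s‖)) := by
  have hexp := NormedSpace.expSeries_div_hasSum_exp (((n + 1 : ℕ) : ℝ) * ‖s‖)
  rw [← Real.exp_eq_exp_ℝ] at hexp
  have hterm : (fun j ↦ ‖cayleyFamily s (n, j)‖) = fun j : ℕ ↦
      ‖cayleyCoeff n‖ * ‖s‖ ^ (n + 1) * ((((n + 1 : ℕ) : ℝ) * ‖s‖) ^ j / (j.factorial : ℝ)) := by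
    ext j
    simp only [cayleyFamily, norm_mul, norm_div, norm_pow, norm_neg, Complex.norm_natCast, pow_add,
      mul_pow]
    ring
  rw [hterm]
  exact hexp.mul_left _

theorem summable_norm_cayleyFamily {s : ℂ} (hs : Real.exp 1 * ‖s‖ * Real.exp ‖s‖ < 1) :
    Summable fun p ↦ ‖cayleyFamily s p‖ := by
  refine (summable_prod_of_nonneg fun _ ↦ norm_nonneg _).mpr
    ⟨fun n ↦ (hasSum_norm_cayleyFamily_fiber s n).summable, ?_⟩
  have hgeom := (summable_nat_add_iff 1).mpr (summable_geometric_of_lt_one (by positivity) hs)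
  refine hgeom.of_nonneg_of_le (fun n ↦ tsum_nonneg fun _ ↦ norm_nonneg _) fun n ↦ ?_
  rw [(hasSum_norm_cayleyFamily_fiber s n).tsum_eq, Real.exp_nat_mul, mul_pow, mul_pow]
  gcongr
  exact norm_cayleyCoeff_le n

theorem cayleyFamily_eq_choose_mul {s : ℂ} {n j : ℕ} (hk : 1 ≤ n + j) :
    cayleyFamily s (n, j) = s ^ (n + j + 1) / ((n + j + 1).factorial : ℂ) *
      ((-1) ^ j * (n + j + 1).choose (n + 1) * ((n + 1 : ℕ) : ℂ) ^ (n + j - 1)) := by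
  have hpos : ((n + 1 : ℕ) : ℂ) ≠ 0 := Nat.cast_ne_zero.mpr n.succ_ne_zero
  have hpow : ((n + 1 : ℕ) : ℂ) ^ ((n : ℤ) - 1) * ((n + 1 : ℕ) : ℂ) ^ j =
      ((n + 1 : ℕ) : ℂ) ^ (n + j - 1) := by
    rw [← zpow_natCast, ← zpow_natCast, ← zpow_add₀ hpos]
    congr 1
    push_cast [Nat.cast_sub hk]
    ring
  have hfact : ((n + j + 1).choose (n + 1) : ℂ) * ((n + 1).factorial : ℂ) * (j.factorial : ℂ) =
      ((n + j + 1).factorial : ℂ) := by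
    have := Nat.add_choose_mul_factorial_mul_factorial j (n + 1)
    rw [show j + (n + 1) = n + j + 1 by omega] at this
    rw [mul_right_comm]
    exact_mod_cast this
  have hfact_ne : ∀ m : ℕ, (m.factorial : ℂ) ≠ 0 :=
    fun m ↦ Nat.cast_ne_zero.mpr m.factorial_ne_zero
  have hchoose : ((n + j + 1).choose (n + 1) : ℂ) ≠ 0 :=
    Nat.cast_ne_zero.mpr (Nat.choose_pos (by omega)).ne'
  rw [cayleyFamily, cayleyCoeff, neg_pow, ← hpow, ← hfact, add_right_comm n 1 j]
  field_simp [hfact_ne]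

theorem sum_antidiagonal_cayleyFamily_zero (s : ℂ) :
    ∑ p ∈ antidiagonal 0, cayleyFamily s p = s := by
  simp [cayleyFamily, cayleyCoeff]

theorem sum_antidiagonal_cayleyFamily_one (s : ℂ) :
    ∑ p ∈ antidiagonal 1, cayleyFamily s p = -s ^ 2 / 2 := by
  simp [cayleyFamily, cayleyCoeff, Nat.sum_antidiagonal_succ]
  ring

theorem sum_antidiagonal_cayleyFamily_of_two_le (s : ℂ) {k : ℕ} (hk : 2 ≤ k) :
    ∑ p ∈ antidiagonal k, cayleyFamily s p = 0 := by
  have hterm : ∀ p ∈ antidiagonal k, cayleyFamily s p = s ^ (k + 1) / ((k + 1).factorial : ℂ) *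
      ((-1) ^ p.2 * (k + 1).choose (p.1 + 1) * ((p.1 + 1 : ℕ) : ℂ) ^ (k - 1)) := by
    rintro ⟨n, j⟩ hp
    rw [HasAntidiagonal.mem_antidiagonal] at hp
    subst hp
    exact cayleyFamily_eq_choose_mul (by omega)
  have hdiff := sum_antidiagonal_neg_one_pow_mul_choose_mul_pow_eq_zero (R := ℂ)
    (show k - 1 < k + 1 by omega)
  rw [Nat.sum_antidiagonal_succ, Nat.cast_zero, zero_pow (by omega), mul_zero, zero_add] at hdiff
  rw [sum_congr rfl hterm, ← mul_sum, hdiff, mul_zero]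

theorem hasSum_sum_antidiagonal_cayleyFamily (s : ℂ) :
    HasSum (fun k ↦ ∑ p ∈ antidiagonal k, cayleyFamily s p) (s - s ^ 2 / 2) := by
  have h := hasSum_sum_of_ne_finset_zero (L := .unconditional ℕ) (s := range 2)
    (f := fun k ↦ ∑ p ∈ antidiagonal k, cayleyFamily s p)
    fun k hk ↦ sum_antidiagonal_cayleyFamily_of_two_le s (by simp at hk; omega)
  rw [sum_range_succ, sum_range_one, sum_antidiagonal_cayleyFamily_zero,
    sum_antidiagonal_cayleyFamily_one] at h
  convert h using 1
  ring

theorem summable_norm_and_hasSum_cayley {s : ℂ}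
    (hs : Real.exp 1 * ‖s‖ * Real.exp ‖s‖ < 1) :
    Summable (fun m ↦ ‖cayleyCoeff m * (s * Complex.exp (-s)) ^ (m + 1)‖) ∧
      HasSum (fun m ↦ cayleyCoeff m * (s * Complex.exp (-s)) ^ (m + 1)) (s - s ^ 2 / 2) := by
  have hF := summable_norm_cayleyFamily hs
  refine ⟨hF.prod.of_nonneg_of_le (fun _ ↦ norm_nonneg _) fun n ↦ ?_, ?_⟩
  · rw [← (hasSum_cayleyFamily_fiber s n).tsum_eq]
    exact norm_tsum_le_tsum_norm (hasSum_norm_cayleyFamily_fiber s n).summable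
  · have hS := hF.of_norm.hasSum
    rw [← hS.sum_antidiagonal.unique (hasSum_sum_antidiagonal_cayleyFamily s)]
    exact hS.prod_fiberwise (hasSum_cayleyFamily_fiber s)

theorem eventually_summable_norm_and_hasSum_cayley : ∀ᶠ s in 𝓝 (0 : ℂ),
    Summable (fun m ↦ ‖cayleyCoeff m * (s * Complex.exp (-s)) ^ (m + 1)‖) ∧
      HasSum (fun m ↦ cayleyCoeff m * (s * Complex.exp (-s)) ^ (m + 1)) (s - s ^ 2 / 2) := by
  have hcont : Continuous fun s : ℂ ↦ Real.exp 1 * ‖s‖ * Real.exp ‖s‖ := by fun_prop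
  exact (hcont.continuousAt.eventually_lt continuousAt_const (by simp)).mono
    fun s hs ↦ summable_norm_and_hasSum_cayley hs

theorem lambert_term_eq_cayley {r : ℕ} (hr : r ≠ 0) (z : ℂ) (m : ℕ) :
    ((r * (m + 1) : ℕ) : ℂ) ^ ((m : ℤ) - 1) / ((m + 1).factorial : ℂ) *
        (z * Complex.exp (-z ^ r)) ^ (r * (m + 1)) =
      ((r : ℂ) ^ 2)⁻¹ * (cayleyCoeff m * (r * z ^ r * Complex.exp (-(r * z ^ r))) ^ (m + 1)) := by
  have hr' : (r : ℂ) ≠ 0 := Nat.cast_ne_zero.mpr hr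
  have hrpow : (r : ℂ) ^ ((m : ℤ) - 1) = ((r : ℂ) ^ 2)⁻¹ * (r : ℂ) ^ (m + 1) := by
    rw [← zpow_natCast, ← zpow_natCast, ← zpow_neg, ← zpow_add₀ hr']
    congr 1
    push_cast
    ring
  have hxpow : (z * Complex.exp (-z ^ r)) ^ (r * (m + 1)) =
      (z ^ r * Complex.exp (-(r * z ^ r))) ^ (m + 1) := by
    rw [pow_mul, mul_pow, ← Complex.exp_nat_mul, mul_neg]
  rw [Nat.cast_mul, mul_zpow, hrpow, hxpow, cayleyCoeff]
  ring

/-- for every integer r ≥ 1 there is ε > 0 such that for ‖z‖ < ε, writing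
x = z·exp(−z^r), the series Σ_{m≥1} ((rm)^{m−2}/m!)·x^{rm} converges absolutely and
equals z^r/r − z^{2r}/2.  (The sum is indexed by m : ℕ with the original index m+1, and
the exponent m−2 is an integer exponent, i.e. (m : ℤ) − 1 after the shift.) -/
theorem stmt0 (r : ℕ) (hr : 1 ≤ r) :
    ∃ ε > (0 : ℝ), ∀ z : ℂ, ‖z‖ < ε →
      (Summable fun m : ℕ =>
        ‖((r * (m + 1) : ℕ) : ℂ) ^ ((m : ℤ) - 1) / (Nat.factorial (m + 1) : ℂ) *
          (z * Complex.exp (-z ^ r)) ^ (r * (m + 1))‖) ∧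
      HasSum (fun m : ℕ =>
        ((r * (m + 1) : ℕ) : ℂ) ^ ((m : ℤ) - 1) / (Nat.factorial (m + 1) : ℂ) *
          (z * Complex.exp (-z ^ r)) ^ (r * (m + 1)))
        (z ^ r / (r : ℂ) - z ^ (2 * r) / 2) := by
  have hr0 : r ≠ 0 := by omega
  have hcont : Continuous fun z : ℂ ↦ (r : ℂ) * z ^ r := by fun_prop
  have hs : Tendsto (fun z : ℂ ↦ (r : ℂ) * z ^ r) (𝓝 0) (𝓝 0) := by
    simpa [zero_pow hr0] using hcont.tendsto 0
  obtain ⟨ε, hε, hball⟩ :=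
    Metric.eventually_nhds_iff.mp (hs.eventually eventually_summable_norm_and_hasSum_cayley)
  refine ⟨ε, hε, fun z hz ↦ ?_⟩
  obtain ⟨hnorm, hsum⟩ := hball (by simpa using hz)
  have htarget : z ^ r / (r : ℂ) - z ^ (2 * r) / 2 =
      ((r : ℂ) ^ 2)⁻¹ * (r * z ^ r - (r * z ^ r) ^ 2 / 2) := by
    field_simp
    ring
  simp_rw [lambert_term_eq_cayley hr0, htarget]
  exact ⟨by simpa only [norm_mul] using hnorm.mul_left ‖((r : ℂ) ^ 2)⁻¹‖, hsum.mul_left _⟩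
end

section
/- (Commutation relation [P,Q] = P of Theorem 1.3.) Fix an integer r ≥ 1. For a smooth function f : ℝ² → ℝ of the variables (w, ħ), define (Pf)(w,ħ) = ħ·∂f/∂w(w,ħ) + exp(r(−w + (r−1)ħ/2))·f(w−rħ, ħ) and (Qf)(w,ħ) = (ħ/2)·∂²f/∂w²(w,ħ) + (1/r + ħ/2)·∂f/∂w(w,ħ) − ħ·∂f/∂ħ(w,ħ). Then for every smooth f : ℝ² → ℝ and all (w,ħ) ∈ ℝ², P(Qf)(w,ħ) − Q(Pf)(w,ħ) = (Pf)(w,ħ). -/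
/-!
Write `P = ħ∂_w + T` with `T g = e^{r(−w+(r−1)ħ/2)} g(w − rħ, ħ)`.
The coefficients of `Q` do not depend on `w` and `∂_w` commutes with `∂_ħ`, so `∂_w` commutes
with `Q`; multiplication by `ħ` only fails to commute with the term `−ħ∂_ħ`, which gives
`Q(ħk) = ħQk − ħk`, hence `[ħ∂_w, Q] = ħ∂_w`.
For the shift part, `∂_w T = T∂_w − rT` and `∂_ħ T = T∂_ħ − rT∂_w + r(r−1)/2 · T`. Substituting
into `Q`, the cross terms cancel and the coefficient of `T` is
`ħr²/2 − r·(1/r) − ħr/2 − ħr(r−1)/2 = −1`, so `QT = TQ − T`, i.e. `[T, Q] = T`.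
-/

/-- The quantum curve operator P: (Pf)(w,ħ) = ħ·∂f/∂w(w,ħ) +
exp(r(−w+(r−1)ħ/2))·f(w−rħ, ħ). -/
noncomputable def Pop (r : ℕ) (f : ℝ × ℝ → ℝ) : ℝ × ℝ → ℝ := fun p =>
  p.2 * deriv (fun w => f (w, p.2)) p.1 +
    Real.exp ((r : ℝ) * (-p.1 + ((r : ℝ) - 1) * p.2 / 2)) * f (p.1 - (r : ℝ) * p.2, p.2)

/-- The operator Q: (Qf)(w,ħ) = (ħ/2)·∂²f/∂w²(w,ħ) + (1/r + ħ/2)·∂f/∂w(w,ħ) − ħ·∂f/∂ħ(w,ħ). -/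
noncomputable def Qop (r : ℕ) (f : ℝ × ℝ → ℝ) : ℝ × ℝ → ℝ := fun p =>
  p.2 / 2 * deriv (fun w => deriv (fun w' => f (w', p.2)) w) p.1 +
    (1 / (r : ℝ) + p.2 / 2) * deriv (fun w => f (w, p.2)) p.1 -
    p.2 * deriv (fun h => f (p.1, h)) p.2

namespace QuantumCurve

open scoped ContDiff

variable {g k : ℝ × ℝ → ℝ}

noncomputable def partialW (g : ℝ × ℝ → ℝ) : ℝ × ℝ → ℝ := fun p =>
  deriv (fun w => g (w, p.2)) p.1

noncomputable def partialH (g : ℝ × ℝ → ℝ) : ℝ × ℝ → ℝ := fun p =>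
  deriv (fun h => g (p.1, h)) p.2

theorem hasDerivAt_partialW (hg : Differentiable ℝ g) (w h : ℝ) :
    HasDerivAt (fun w => g (w, h)) (partialW g (w, h)) w :=
  ((hg _).comp w (differentiableAt_id.prodMk (differentiableAt_const h))).hasDerivAt

theorem hasDerivAt_partialH (hg : Differentiable ℝ g) (w h : ℝ) :
    HasDerivAt (fun h => g (w, h)) (partialH g (w, h)) h :=
  ((hg _).comp h ((differentiableAt_const w).prodMk differentiableAt_id)).hasDerivAt

theorem partialW_eq_fderiv (hg : Differentiable ℝ g) :
    partialW g = fun p => fderiv ℝ g p (1, 0) :=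
  funext fun p => ((hg p).hasFDerivAt.comp_hasDerivAt p.1
    ((hasDerivAt_id p.1).prodMk (hasDerivAt_const p.1 p.2))).deriv

theorem partialH_eq_fderiv (hg : Differentiable ℝ g) :
    partialH g = fun p => fderiv ℝ g p (0, 1) :=
  funext fun p => ((hg p).hasFDerivAt.comp_hasDerivAt p.2
    ((hasDerivAt_const p.2 p.1).prodMk (hasDerivAt_id p.2))).deriv

theorem contDiff_partialW (hg : ContDiff ℝ ∞ g) : ContDiff ℝ ∞ (partialW g) := by
  rw [partialW_eq_fderiv (hg.differentiable (by simp))]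
  exact (contDiff_infty_iff_fderiv.mp hg).2.clm_apply contDiff_const

theorem contDiff_partialH (hg : ContDiff ℝ ∞ g) : ContDiff ℝ ∞ (partialH g) := by
  rw [partialH_eq_fderiv (hg.differentiable (by simp))]
  exact (contDiff_infty_iff_fderiv.mp hg).2.clm_apply contDiff_const

theorem partialW_partialH_comm (hg : ContDiff ℝ 2 g) (p : ℝ × ℝ) :
    partialW (partialH g) p = partialH (partialW g) p := by
  have hg1 : Differentiable ℝ g := hg.differentiable (by simp)
  have hD : Differentiable ℝ (fderiv ℝ g) :=
    (hg.fderiv_right (m := 1) (by norm_num)).differentiable (by simp)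
  have hDv (v : ℝ × ℝ) : Differentiable ℝ (fun q => fderiv ℝ g q v) :=
    fun q => (hD q).clm_apply (differentiableAt_const v)
  have happly (v : ℝ × ℝ) : fderiv ℝ (fun q => fderiv ℝ g q v) p =
      (ContinuousLinearMap.apply ℝ ℝ v).comp (fderiv ℝ (fderiv ℝ g) p) :=
    ((ContinuousLinearMap.apply ℝ ℝ v).hasFDerivAt.comp p (hD p).hasFDerivAt).fderiv
  rw [partialH_eq_fderiv hg1, partialW_eq_fderiv hg1, partialW_eq_fderiv (hDv _),
    partialH_eq_fderiv (hDv _)]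
  simp only [happly, ContinuousLinearMap.comp_apply, ContinuousLinearMap.apply_apply]
  exact (hg.contDiffAt.isSymmSndFDerivAt (by simp)) _ _

theorem hasDerivAt_shear (hg : Differentiable ℝ g) (c w h : ℝ) :
    HasDerivAt (fun h => g (w - c * h, h))
      (partialH g (w - c * h, h) - c * partialW g (w - c * h, h)) h := by
  have hline : HasDerivAt (fun h => (w - c * h, h)) ((-c, 1) : ℝ × ℝ) h := by
    simpa using ((hasDerivAt_const h w).sub ((hasDerivAt_id' h).const_mul c)).prodMk
      (hasDerivAt_id' h)
  have hcomp := (hg _).hasFDerivAt.comp_hasDerivAt h hline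
  rw [show ((-c, 1) : ℝ × ℝ) = (0, 1) - c • (1, 0) by ext <;> simp, map_sub, map_smul,
    smul_eq_mul] at hcomp
  rwa [partialW_eq_fderiv hg, partialH_eq_fderiv hg]

theorem partialW_add (hg : Differentiable ℝ g) (hk : Differentiable ℝ k) :
    partialW (g + k) = partialW g + partialW k :=
  funext fun p => ((hasDerivAt_partialW hg p.1 p.2).add (hasDerivAt_partialW hk p.1 p.2)).deriv

theorem partialW_sub (hg : Differentiable ℝ g) (hk : Differentiable ℝ k) :
    partialW (g - k) = partialW g - partialW k :=
  funext fun p => ((hasDerivAt_partialW hg p.1 p.2).sub (hasDerivAt_partialW hk p.1 p.2)).deriv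

theorem partialH_add (hg : Differentiable ℝ g) (hk : Differentiable ℝ k) :
    partialH (g + k) = partialH g + partialH k :=
  funext fun p => ((hasDerivAt_partialH hg p.1 p.2).add (hasDerivAt_partialH hk p.1 p.2)).deriv

theorem partialW_const_smul (c : ℝ) : partialW (c • g) = c • partialW g :=
  funext fun p => congrFun (deriv_const_mul_field' c) p.1

theorem partialW_hbar_mul : partialW (fun q => q.2 * g q) = fun q => q.2 * partialW g q :=
  funext fun p => congrFun (deriv_const_mul_field' p.2) p.1

theorem partialH_hbar_mul (hg : Differentiable ℝ g) (p : ℝ × ℝ) :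
    partialH (fun q => q.2 * g q) p = g p + p.2 * partialH g p :=
  ((hasDerivAt_id' p.2).mul (hasDerivAt_partialH hg p.1 p.2)).deriv.trans (by rw [one_mul])

theorem Qop_apply (r : ℕ) (g : ℝ × ℝ → ℝ) (p : ℝ × ℝ) :
    Qop r g p = p.2 / 2 * partialW (partialW g) p + (1 / (r : ℝ) + p.2 / 2) * partialW g p -
      p.2 * partialH g p :=
  rfl

theorem Qop_add (r : ℕ) (hg : ContDiff ℝ ∞ g) (hk : ContDiff ℝ ∞ k) (p : ℝ × ℝ) :
    Qop r (g + k) p = Qop r g p + Qop r k p := by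
  have hg1 := hg.differentiable (by simp)
  have hk1 := hk.differentiable (by simp)
  simp only [Qop_apply, partialW_add hg1 hk1, partialH_add hg1 hk1, Pi.add_apply,
    partialW_add ((contDiff_partialW hg).differentiable (by simp))
      ((contDiff_partialW hk).differentiable (by simp))]
  ring

theorem partialW_Qop (r : ℕ) (hg : ContDiff ℝ ∞ g) (p : ℝ × ℝ) :
    partialW (Qop r g) p = Qop r (partialW g) p := by
  have hW := contDiff_partialW hg
  have hWW := hasDerivAt_partialW ((contDiff_partialW hW).differentiable (by simp)) p.1 p.2
  have hW' := hasDerivAt_partialW (hW.differentiable (by simp)) p.1 p.2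
  have hH := hasDerivAt_partialW ((contDiff_partialH hg).differentiable (by simp)) p.1 p.2
  rw [Qop_apply, ← partialW_partialH_comm (hg.of_le (by norm_cast)) p]
  exact (((hWW.const_mul (p.2 / 2)).add (hW'.const_mul (1 / (r : ℝ) + p.2 / 2))).sub
    (hH.const_mul p.2)).deriv

theorem Qop_hbar_mul (r : ℕ) (hg : Differentiable ℝ g) (p : ℝ × ℝ) :
    Qop r (fun q => q.2 * g q) p = p.2 * Qop r g p - p.2 * g p := by
  rw [Qop_apply, partialW_hbar_mul, partialW_hbar_mul, partialH_hbar_mul hg, Qop_apply]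
  ring

theorem hbar_partialW_comm_Qop (r : ℕ) (hg : ContDiff ℝ ∞ g) (p : ℝ × ℝ) :
    p.2 * partialW (Qop r g) p - Qop r (fun q => q.2 * partialW g q) p = p.2 * partialW g p := by
  rw [partialW_Qop r hg, Qop_hbar_mul r ((contDiff_partialW hg).differentiable (by simp))]
  ring

noncomputable def weightedShift (r : ℕ) (g : ℝ × ℝ → ℝ) : ℝ × ℝ → ℝ := fun p =>
  Real.exp ((r : ℝ) * (-p.1 + ((r : ℝ) - 1) * p.2 / 2)) * g (p.1 - (r : ℝ) * p.2, p.2)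

theorem Pop_eq (r : ℕ) (g : ℝ × ℝ → ℝ) :
    Pop r g = (fun p => p.2 * partialW g p) + weightedShift r g :=
  rfl

theorem contDiff_weightedShift {n : WithTop ℕ∞} (r : ℕ) (hg : ContDiff ℝ n g) :
    ContDiff ℝ n (weightedShift r g) := by
  unfold QuantumCurve.weightedShift
  fun_prop

theorem partialW_weightedShift (r : ℕ) (hg : Differentiable ℝ g) :
    partialW (weightedShift r g) =
      weightedShift r (partialW g) - (r : ℝ) • weightedShift r g := by
  funext p
  have hexp := (((hasDerivAt_neg' p.1).add_const (((r : ℝ) - 1) * p.2 / 2)).const_mul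
    (r : ℝ)).exp
  have hshift := (hasDerivAt_partialW hg (p.1 - r * p.2) p.2).comp_sub_const p.1 ((r : ℝ) * p.2)
  refine (hexp.mul hshift).deriv.trans ?_
  simp only [weightedShift, Pi.sub_apply, Pi.smul_apply, smul_eq_mul]
  ring

theorem partialH_weightedShift (r : ℕ) (hg : Differentiable ℝ g) (p : ℝ × ℝ) :
    partialH (weightedShift r g) p = weightedShift r (partialH g) p -
      r * weightedShift r (partialW g) p + r * (r - 1) / 2 * weightedShift r g p := by
  have hexp := (((((hasDerivAt_id' p.2).const_mul ((r : ℝ) - 1)).div_const 2).const_add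
    (-p.1)).const_mul (r : ℝ)).exp
  refine (hexp.mul (hasDerivAt_shear hg r p.1 p.2)).deriv.trans ?_
  simp only [weightedShift]
  ring

theorem weightedShift_comm_Qop {r : ℕ} (hr : r ≠ 0) (hg : ContDiff ℝ ∞ g) (p : ℝ × ℝ) :
    weightedShift r (Qop r g) p - Qop r (weightedShift r g) p = weightedShift r g p := by
  have hg1 := hg.differentiable (by simp)
  have hgW := (contDiff_partialW hg).differentiable (by simp)
  rw [Qop_apply r (weightedShift r g), partialW_weightedShift r hg1,
    partialW_sub ((contDiff_weightedShift r (contDiff_partialW hg)).differentiable (by simp))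
      (((contDiff_weightedShift r hg).differentiable (by simp)).const_smul _),
    partialW_const_smul, partialW_weightedShift r hg1, partialW_weightedShift r hgW,
    partialH_weightedShift r hg1]
  simp only [weightedShift, Qop_apply, Pi.sub_apply, Pi.smul_apply, smul_eq_mul]
  have hr' : (r : ℝ) ≠ 0 := by exact_mod_cast hr
  field_simp
  ring

end QuantumCurve

open QuantumCurve

/-- the commutation relation [P,Q] = P on smooth functions of (w,ħ). -/
theorem stmt4 (r : ℕ) (hr : 1 ≤ r) (f : ℝ × ℝ → ℝ) (hf : ContDiff ℝ (⊤ : ℕ∞) f)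
    (p : ℝ × ℝ) :
    Pop r (Qop r f) p - Qop r (Pop r f) p = Pop r f p := by
  rw [Pop_eq, Pop_eq, Qop_add r (contDiff_snd.mul (contDiff_partialW hf))
    (contDiff_weightedShift r hf)]
  simp only [Pi.add_apply]
  linear_combination hbar_partialW_comm_Qop r hf p +
    weightedShift_comm_Qop (Nat.one_le_iff_ne_zero.mp hr) hf p
end

section
/- (Lemma 7.1, deck transformation of the r-Lambert curve.) Fix an integer r ≥ 1 and let α ∈ ℂ be any r-th root of unity. Then there exist an open neighborhood V of α and a holomorphic function s : V → ℂ such that: s(α) = α; s'(α) = −1 (in particular s is not the identity); s(s(η)) = η for all η in some neighborhood of α contained in V; and s(η)·exp(−s(η)^r/r) = η·exp(−η^r/r) for all η ∈ V. Moreover s is given by the formula s(η) = η·exp(((1−η^r) − ψ(1−η^r))/r), where ψ is a holomorphic function defined near 0 ∈ ℂ, independent of the choice of the root α, satisfying ψ(0) = 0, ψ'(0) = −1 and ψ(Δ) + Log(1−ψ(Δ)) = Δ + Log(1−Δ) for all Δ near 0 (Log the principal logarithm). -/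
/-!
Put `Δ = 1 - η ^ r`. Then `η ^ r = 1 - Δ`, so `x(η) ^ r = e⁻¹ · exp (Δ + log (1 - Δ))`, and a deck
transformation has to move `Δ` by the nontrivial involution `ψ` that preserves
`F(Δ) = Δ + log (1 - Δ)`. Since `F = -Δ² (1/2 + Δ/3 + ⋯)` has a double zero at `0`, it is the
square of a local coordinate `h`, and `ψ = h⁻¹ ∘ (-h)`. The lift `s(η) = η · exp ((Δ - ψ Δ) / r)`
satisfies `s ^ r = (1 - Δ) · exp (Δ - ψ Δ) = 1 - ψ Δ` by the functional equation of `ψ`; hence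
`x ∘ s = x`, and `s ∘ s = id` because `ψ` is an involution.
-/

open Complex Filter FormalMultilinearSeries
open scoped Topology

noncomputable def logTail : ℂ → ℂ := ofScalarsSum fun n : ℕ => ((n : ℂ) + 2)⁻¹

lemma one_le_radius_logTail : 1 ≤ (ofScalars ℂ fun n : ℕ => ((n : ℂ) + 2)⁻¹).radius := by
  refine le_radius_of_bound _ 1 fun n => ?_
  rw [ofScalars_norm, NNReal.coe_one, one_pow, mul_one, norm_inv]
  exact inv_le_one_of_one_le₀ (by
    rw [show (n : ℂ) + 2 = ((n + 2 : ℕ) : ℂ) by push_cast; rfl, norm_natCast]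
    exact_mod_cast Nat.le_add_left 1 (n + 1))

lemma hasSum_logTail {w : ℂ} (hw : ‖w‖ < 1) :
    HasSum (fun n : ℕ => ((n : ℂ) + 2)⁻¹ * w ^ n) (logTail w) := by
  have hw' : w ∈ Metric.eball (0 : ℂ) (ofScalars ℂ fun n : ℕ => ((n : ℂ) + 2)⁻¹).radius := by
    refine lt_of_lt_of_le ?_ one_le_radius_logTail
    rw [edist_zero_right, enorm_eq_nnnorm]
    exact_mod_cast hw
  have hsum := FormalMultilinearSeries.hasSum _ hw'
  simp only [ofScalars_apply_eq, smul_eq_mul] at hsum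
  exact hsum

lemma analyticAt_logTail : AnalyticAt ℂ logTail 0 :=
  (FormalMultilinearSeries.hasFPowerSeriesOnBall _
    (zero_lt_one.trans_le one_le_radius_logTail)).analyticAt

lemma logTail_zero : logTail 0 = 2⁻¹ := by
  simp [logTail]

lemma add_log_one_sub_eq {w : ℂ} (hw : ‖w‖ < 1) :
    w + log (1 - w) = -(w ^ 2 * logTail w) := by
  have hlog := (hasSum_nat_add_iff' 2).mpr (hasSum_taylorSeries_neg_log hw)
  have htail : HasSum (fun n : ℕ => w ^ (n + 2) / ((n + 2 : ℕ) : ℂ)) (w ^ 2 * logTail w) :=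
    ((hasSum_logTail hw).mul_left (w ^ 2)).congr_fun fun n => by push_cast; ring
  have hfirst : ∑ i ∈ Finset.range 2, w ^ i / (i : ℂ) = w := by
    simp [Finset.sum_range_succ]
  rw [hfirst] at hlog
  linear_combination htail.unique hlog

lemma AnalyticAt.exists_pow_eq {f : ℂ → ℂ} {z₀ : ℂ} (hf : AnalyticAt ℂ f z₀) (hf₀ : f z₀ ≠ 0)
    {n : ℕ} (hn : n ≠ 0) : ∃ k : ℂ → ℂ, AnalyticAt ℂ k z₀ ∧ ∀ᶠ z in 𝓝 z₀, k z ^ n = f z := by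
  obtain ⟨c, hc⟩ := IsAlgClosed.exists_pow_nat_eq (f z₀) (Nat.pos_of_ne_zero hn)
  have hq : AnalyticAt ℂ (fun z => f z / f z₀) z₀ := hf.div_const
  have hq₀ : f z₀ / f z₀ = 1 := div_self hf₀
  refine ⟨fun z => c * Complex.exp (Complex.log (f z / f z₀) / n), ?_, ?_⟩
  · exact analyticAt_const.mul
      ((hq.clog (by rw [hq₀]; exact one_mem_slitPlane)).div_const.cexp)
  · filter_upwards [hq.continuousAt.eventually_ne (by rw [hq₀]; exact one_ne_zero)] with z hz
    rw [mul_pow, ← Complex.exp_nat_mul, mul_div_cancel₀ _ (Nat.cast_ne_zero.mpr hn), exp_log hz, hc,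
      mul_div_cancel₀ _ hf₀]

lemma exists_sq_eq_add_log_one_sub : ∃ h : ℂ → ℂ, AnalyticAt ℂ h 0 ∧ h 0 = 0 ∧ deriv h 0 ≠ 0 ∧
    ∀ᶠ w in 𝓝 0, h w ^ 2 = w + log (1 - w) := by
  obtain ⟨k, hk, hk2⟩ := analyticAt_logTail.neg.exists_pow_eq
    (by rw [Pi.neg_apply, logTail_zero]; norm_num) two_ne_zero
  have hk₀ : k 0 ≠ 0 := by
    intro h0
    have := hk2.self_of_nhds
    rw [h0, Pi.neg_apply, logTail_zero] at this
    norm_num at this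
  have hderiv : HasDerivAt (fun w => w * k w) (k 0) 0 := by
    simpa using (hasDerivAt_id' (0 : ℂ)).fun_mul hk.differentiableAt.hasDerivAt
  refine ⟨fun w => w * k w, analyticAt_id.mul hk, zero_mul _, hderiv.deriv ▸ hk₀, ?_⟩
  filter_upwards [hk2, Metric.ball_mem_nhds (0 : ℂ) one_pos] with w hkw hw
  rw [add_log_one_sub_eq (mem_ball_zero_iff.mp hw), mul_pow, hkw, Pi.neg_apply, mul_neg]

lemma AnalyticAt.exists_involution_comp_eq_neg {h : ℂ → ℂ} (hh : AnalyticAt ℂ h 0)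
    (h₀ : h 0 = 0) (h' : deriv h 0 ≠ 0) : ∃ ψ : ℂ → ℂ, AnalyticAt ℂ ψ 0 ∧ ψ 0 = 0 ∧
      HasDerivAt ψ (-1) 0 ∧ ∀ᶠ z in 𝓝 0, h (ψ z) = -h z ∧ ψ (ψ z) = z := by
  set g := hh.hasStrictDerivAt.localInverse h (deriv h 0) 0 h'
  have hg : AnalyticAt ℂ g 0 := h₀ ▸ hh.analyticAt_localInverse h'
  have hg₀ : g 0 = 0 := by
    simpa [h₀] using (hh.hasStrictDerivAt.eventually_left_inverse h').self_of_nhds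
  have hnegh : Tendsto (fun z => -h z) (𝓝 0) (𝓝 0) := by
    simpa [h₀] using hh.continuousAt.fun_neg.tendsto
  have hright : ∀ᶠ z in 𝓝 0, h (g (-h z)) = -h z :=
    hnegh.eventually (h₀ ▸ hh.hasStrictDerivAt.eventually_right_inverse h')
  refine ⟨fun z => g (-h z), hg.comp_of_eq hh.neg (by simp [h₀]), by simp [h₀, hg₀], ?_, ?_⟩
  · have hg' : HasDerivAt g (deriv h 0)⁻¹ (-h 0) := by
      simpa [h₀] using (hh.hasStrictDerivAt.to_localInverse h').hasDerivAt
    have hcomp := hg'.comp 0 hh.differentiableAt.hasDerivAt.neg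
    rwa [mul_neg, inv_mul_cancel₀ h'] at hcomp
  · filter_upwards [hright, hh.hasStrictDerivAt.eventually_left_inverse h'] with z hz hleft
    exact ⟨hz, by rw [hz, neg_neg]; exact hleft⟩

lemma exists_involution_add_log_one_sub : ∃ ψ : ℂ → ℂ, AnalyticAt ℂ ψ 0 ∧ ψ 0 = 0 ∧
    HasDerivAt ψ (-1) 0 ∧
      ∀ᶠ Δ in 𝓝 0, ψ (ψ Δ) = Δ ∧ ψ Δ + log (1 - ψ Δ) = Δ + log (1 - Δ) := by
  obtain ⟨h, hh, h₀, h', hsq⟩ := exists_sq_eq_add_log_one_sub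
  obtain ⟨ψ, hψ, hψ₀, hψ', hev⟩ := hh.exists_involution_comp_eq_neg h₀ h'
  have hψt : Tendsto ψ (𝓝 0) (𝓝 0) := by simpa [hψ₀] using hψ.continuousAt.tendsto
  refine ⟨ψ, hψ, hψ₀, hψ', ?_⟩
  filter_upwards [hev, hsq, hψt.eventually hsq] with Δ ⟨hneg, hinv⟩ hΔ hψΔ
  exact ⟨hinv, by rw [← hψΔ, ← hΔ, hneg, neg_sq]⟩

lemma one_sub_eq_mul_exp_of_add_log_eq {a b : ℂ} (ha : a ≠ 1) (hb : b ≠ 1)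
    (h : a + log (1 - a) = b + log (1 - b)) : 1 - a = (1 - b) * Complex.exp (b - a) := by
  rw [← exp_log (sub_ne_zero.mpr ha.symm), ← exp_log (sub_ne_zero.mpr hb.symm), ← Complex.exp_add]
  congr 1
  linear_combination h

noncomputable def deckTransformation (ψ : ℂ → ℂ) (r : ℕ) (η : ℂ) : ℂ :=
  η * Complex.exp (((1 - η ^ r) - ψ (1 - η ^ r)) / r)

section deckTransformation

variable {ψ : ℂ → ℂ} {r : ℕ} {η : ℂ}

lemma one_sub_deckTransformation_pow (hr : r ≠ 0) (hη : 1 - η ^ r ≠ 1)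
    (hψ : ψ (1 - η ^ r) ≠ 1)
    (hψη : ψ (1 - η ^ r) + log (1 - ψ (1 - η ^ r)) = (1 - η ^ r) + log (1 - (1 - η ^ r))) :
    1 - deckTransformation ψ r η ^ r = ψ (1 - η ^ r) := by
  have key := one_sub_eq_mul_exp_of_add_log_eq hψ hη hψη
  rw [sub_sub_cancel] at key
  rw [deckTransformation, mul_pow, ← Complex.exp_nat_mul,
    mul_div_cancel₀ _ (Nat.cast_ne_zero.mpr hr), ← key, sub_sub_cancel]

lemma deckTransformation_mul_exp
    (hs : 1 - deckTransformation ψ r η ^ r = ψ (1 - η ^ r)) :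
    deckTransformation ψ r η * Complex.exp (-deckTransformation ψ r η ^ r / r) =
      η * Complex.exp (-η ^ r / r) := by
  have hs' : -deckTransformation ψ r η ^ r = ψ (1 - η ^ r) - 1 := by linear_combination hs
  rw [hs', deckTransformation, mul_assoc, ← Complex.exp_add]
  congr 2
  ring

lemma deckTransformation_deckTransformation
    (hs : 1 - deckTransformation ψ r η ^ r = ψ (1 - η ^ r))
    (hψψ : ψ (ψ (1 - η ^ r)) = 1 - η ^ r) :
    deckTransformation ψ r (deckTransformation ψ r η) = η := by
  conv_lhs => rw [deckTransformation, hs, hψψ, deckTransformation, mul_assoc, ← Complex.exp_add]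
  rw [← add_div, sub_add_sub_cancel', sub_self, zero_div, Complex.exp_zero, mul_one]

lemma analyticAt_deckTransformation (hψ : AnalyticAt ℂ ψ (1 - η ^ r)) :
    AnalyticAt ℂ (deckTransformation ψ r) η := by
  have hΔ : AnalyticAt ℂ (fun η : ℂ => 1 - η ^ r) η := by fun_prop
  exact analyticAt_id.mul ((hΔ.sub (hψ.comp (f := fun η : ℂ => 1 - η ^ r) hΔ)).div_const.cexp)

lemma deckTransformation_of_pow_eq_one {α : ℂ} (hα : α ^ r = 1) (hψ₀ : ψ 0 = 0) :
    deckTransformation ψ r α = α := by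
  simp [deckTransformation, hα, hψ₀]

lemma hasDerivAt_deckTransformation (hr : r ≠ 0) {α : ℂ} (hα : α ^ r = 1) (hψ₀ : ψ 0 = 0)
    (hψ' : HasDerivAt ψ (-1) 0) : HasDerivAt (deckTransformation ψ r) (-1) α := by
  have hΔ : HasDerivAt (fun η : ℂ => 1 - η ^ r) (-(r * α ^ (r - 1))) α :=
    (hasDerivAt_pow r α).const_sub 1
  have hψΔ : HasDerivAt (fun η => ψ (1 - η ^ r)) (-1 * -(r * α ^ (r - 1))) α := by
    apply HasDerivAt.comp α _ hΔ
    simpa [hα] using hψ'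
  have hs : HasDerivAt (deckTransformation ψ r)
      (1 * Complex.exp (((1 - α ^ r) - ψ (1 - α ^ r)) / r) +
        α * (Complex.exp (((1 - α ^ r) - ψ (1 - α ^ r)) / r) *
          ((-(r * α ^ (r - 1)) - -1 * -(r * α ^ (r - 1))) / r))) α :=
    (hasDerivAt_id' α).fun_mul ((hΔ.fun_sub hψΔ).div_const (r : ℂ)).cexp
  convert hs using 1
  have hα' : α ^ (r - 1) * α = 1 := by
    rw [← pow_succ, Nat.sub_add_cancel (Nat.pos_of_ne_zero hr), hα]
  rw [hα, sub_self, hψ₀, sub_zero, zero_div, Complex.exp_zero]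
  field_simp
  linear_combination 2 * hα'

end deckTransformation

/-- Lemma 7.1: for every r ≥ 1 there is a holomorphic function ψ near 0
(independent of the choice of root of unity) with ψ(0) = 0, ψ'(0) = −1 and
ψ(Δ) + Log(1−ψ(Δ)) = Δ + Log(1−Δ), such that for every r-th root of unity α there are
an open neighborhood V of α and a holomorphic function s on V with s(α) = α,
s'(α) = −1, s∘s = id near α, x(s(η)) = x(η) on V for x(η) = η·exp(−η^r/r), and
s(η) = η·exp(((1−η^r) − ψ(1−η^r))/r) on V. -/
theorem stmt5 (r : ℕ) (hr : 1 ≤ r) :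
    ∃ (ψ : ℂ → ℂ) (δ : ℝ), 0 < δ ∧
      (∀ Δ ∈ Metric.ball (0 : ℂ) δ, AnalyticAt ℂ ψ Δ) ∧
      ψ 0 = 0 ∧ deriv ψ 0 = -1 ∧
      (∀ Δ : ℂ, ‖Δ‖ < δ →
        ψ Δ + Complex.log (1 - ψ Δ) = Δ + Complex.log (1 - Δ)) ∧
      ∀ α : ℂ, α ^ r = 1 →
        ∃ (V : Set ℂ) (s : ℂ → ℂ), IsOpen V ∧ α ∈ V ∧
          (∀ η ∈ V, AnalyticAt ℂ s η) ∧
          s α = α ∧ deriv s α = -1 ∧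
          (∃ W ∈ nhds α, W ⊆ V ∧ ∀ η ∈ W, s (s η) = η) ∧
          (∀ η ∈ V,
            s η * Complex.exp (-(s η) ^ r / (r : ℂ)) =
              η * Complex.exp (-η ^ r / (r : ℂ))) ∧
          (∀ η ∈ V,
            s η = η * Complex.exp (((1 - η ^ r) - ψ (1 - η ^ r)) / (r : ℂ))) := by
  have hr₀ : r ≠ 0 := Nat.one_le_iff_ne_zero.mp hr
  obtain ⟨ψ, hψ, hψ₀, hψ', hψev⟩ := exists_involution_add_log_one_sub
  have hgood : ∀ᶠ Δ in 𝓝 0, AnalyticAt ℂ ψ Δ ∧ Δ ≠ 1 ∧ ψ Δ ≠ 1 ∧ ψ (ψ Δ) = Δ ∧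
      ψ Δ + log (1 - ψ Δ) = Δ + log (1 - Δ) :=
    hψ.eventually_analyticAt.and <| (eventually_ne_nhds zero_ne_one).and <|
      (hψ.continuousAt.eventually_ne (by rw [hψ₀]; exact zero_ne_one)).and hψev
  obtain ⟨δ, hδ, hδgood⟩ := Metric.eventually_nhds_iff.mp hgood
  refine ⟨ψ, δ, hδ, fun Δ hΔ => (hδgood hΔ).1, hψ₀, hψ'.deriv,
    fun Δ hΔ => (hδgood (by rwa [dist_zero_right])).2.2.2.2, fun α hα => ?_⟩
  have hΔ : Tendsto (fun η : ℂ => 1 - η ^ r) (𝓝 α) (𝓝 0) := by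
    have hcont : Continuous fun η : ℂ => 1 - η ^ r := by fun_prop
    simpa [hα] using hcont.tendsto α
  obtain ⟨V, hV, hVo, hαV⟩ := eventually_nhds_iff.mp (hΔ.eventually hgood)
  have hpow : ∀ η ∈ V, 1 - deckTransformation ψ r η ^ r = ψ (1 - η ^ r) := fun η hη =>
    have ⟨_, hη₁, hψ₁, _, hfun⟩ := hV η hη
    one_sub_deckTransformation_pow hr₀ hη₁ hψ₁ hfun
  refine ⟨V, deckTransformation ψ r, hVo, hαV,
    fun η hη => analyticAt_deckTransformation (hV η hη).1,
    deckTransformation_of_pow_eq_one hα hψ₀,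
    (hasDerivAt_deckTransformation hr₀ hα hψ₀ hψ').deriv,
    ⟨V, hVo.mem_nhds hαV, subset_rfl,
      fun η hη => deckTransformation_deckTransformation (hpow η hη) (hV η hη).2.2.2.1⟩,
    fun η hη => deckTransformation_mul_exp (hpow η hη), fun _ _ => rfl⟩
end

section
/- There exist ε > 0 and a holomorphic function ψ on the disk {Δ ∈ ℂ : |Δ| < ε} such that: ψ(0) = 0; ψ'(0) = −1; ψ''(0) = −4/3; ψ(Δ) + Log(1−ψ(Δ)) = Δ + Log(1−Δ) for all |Δ| < ε, where Log denotes the principal branch of the logarithm; ψ(Δ) ≠ Δ for all Δ ≠ 0 with |Δ| < ε; and there exists 0 < ε' ≤ ε with ψ(ψ(Δ)) = Δ for all |Δ| < ε'. -/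
/-!
`F Δ = Δ + log (1 - Δ)` has a nondegenerate critical point at `0` (`F 0 = F' 0 = 0`,
`F'' 0 = -1`), so near `0` it is the square of a local coordinate: `F = h ^ 2` with `h 0 = 0`,
`h' 0 ≠ 0` (take `h Δ = Δ * √(F Δ / Δ ^ 2)`). Then `ψ = h⁻¹ ∘ (-h)` satisfies `F ∘ ψ = F`, is an
involution fixing only `0`, and `ψ' 0 = -1`. Differentiating `F ∘ ψ = F` three times at `0`
gives `3 F'' 0 * ψ'' 0 = -2 F''' 0`, and `F''' 0 = -2` yields `ψ'' 0 = -4/3`.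
-/

open Filter Topology
open scoped Nat

lemma AnalyticAt.exists_analyticAt_sq_eq {g : ℂ → ℂ} {a : ℂ} (hg : AnalyticAt ℂ g a)
    (ha : g a ≠ 0) : ∃ r : ℂ → ℂ, AnalyticAt ℂ r a ∧ r a ≠ 0 ∧ ∀ z, g z = r z ^ 2 := by
  obtain ⟨c, hc⟩ := IsAlgClosed.exists_pow_nat_eq (g a) two_pos
  have hc0 : c ≠ 0 := by rintro rfl; exact ha (by simpa using hc.symm)
  refine ⟨fun z => c * (g z / g a) ^ (2⁻¹ : ℂ), ?_, by simp [ha, hc0], fun z => ?_⟩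
  · exact analyticAt_const.mul
      ((hg.div analyticAt_const ha).cpow analyticAt_const (by simp [ha]))
  · have := Complex.cpow_nat_inv_pow (g z / g a) two_ne_zero
    push_cast at this
    rw [mul_pow, this, hc]
    field_simp

lemma AnalyticAt.exists_eventuallyEq_sq_of_iteratedDeriv_two_ne_zero {f : ℂ → ℂ} {a : ℂ}
    (hf : AnalyticAt ℂ f a) (h₀ : f a = 0) (h₁ : deriv f a = 0) (h₂ : iteratedDeriv 2 f a ≠ 0) :
    ∃ h : ℂ → ℂ, AnalyticAt ℂ h a ∧ h a = 0 ∧ deriv h a ≠ 0 ∧ f =ᶠ[𝓝 a] fun z => h z ^ 2 := by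
  have hord : analyticOrderAt f a = (2 : ℕ) := by
    refine (analyticOrderAt_eq_nat_iff_iteratedDeriv_eq_zero hf).2 ⟨fun k hk => ?_, h₂⟩
    interval_cases k <;> simpa
  obtain ⟨g, hg, hga, hfg⟩ := hf.analyticOrderAt_eq_natCast.1 hord
  obtain ⟨r, hr, hra, hgr⟩ := hg.exists_analyticAt_sq_eq hga
  have hderiv : HasDerivAt (fun z => (z - a) * r z) (r a) a := by
    simpa using ((hasDerivAt_id a).sub_const a).fun_mul hr.differentiableAt.hasDerivAt
  refine ⟨fun z => (z - a) * r z, by fun_prop, by simp, hderiv.deriv ▸ hra, ?_⟩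
  filter_upwards [hfg] with z hz
  rw [hz, hgr, smul_eq_mul]
  ring

lemma mul_iteratedDeriv_two_of_comp_eventuallyEq {𝕜 : Type*} [NontriviallyNormedField 𝕜]
    {f σ : 𝕜 → 𝕜} {a : 𝕜} (hf : ContDiffAt 𝕜 3 f a) (hσ : ContDiffAt 𝕜 3 σ a) (hσa : σ a = a)
    (hσ' : deriv σ a = -1) (hf' : deriv f a = 0) (hfσ : f ∘ σ =ᶠ[𝓝 a] f) :
    3 * iteratedDeriv 2 f a * iteratedDeriv 2 σ a = -2 * iteratedDeriv 3 f a := by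
  have := iteratedDeriv_comp_three (hσa ▸ hf) hσ
  rw [hfσ.iteratedDeriv_eq, hσa, hσ', hf'] at this
  linear_combination this

section ConjNeg

variable {𝕜 : Type*} [NontriviallyNormedField 𝕜] [CompleteSpace 𝕜] {h : 𝕜 → 𝕜} {a : 𝕜}

/-- For `h a = 0`, the deck transformation `h⁻¹ ∘ (-h)` of `z ↦ h z ^ 2` near `a`. -/
noncomputable def AnalyticAt.conjNeg (hh : AnalyticAt 𝕜 h a) (hd : deriv h a ≠ 0) : 𝕜 → 𝕜 :=
  fun z => HasStrictDerivAt.localInverse h (deriv h a) a hh.hasStrictDerivAt hd (-h z)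

namespace AnalyticAt

variable (hh : AnalyticAt 𝕜 h a) (hd : deriv h a ≠ 0)

lemma localInverse_apply_self :
    HasStrictDerivAt.localInverse h (deriv h a) a hh.hasStrictDerivAt hd (h a) = a :=
  HasStrictFDerivAt.localInverse_apply_image _

lemma conjNeg_self (ha : h a = 0) : hh.conjNeg hd a = a := by
  simpa only [conjNeg, ha, neg_zero] using hh.localInverse_apply_self hd

lemma hasDerivAt_conjNeg (ha : h a = 0) : HasDerivAt (hh.conjNeg hd) (-1) a := by
  have hinv := (hh.hasStrictDerivAt.to_localInverse hd).hasDerivAt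
  rw [ha, ← neg_zero, ← ha] at hinv
  have := hinv.comp a hh.differentiableAt.hasDerivAt.fun_neg
  rwa [mul_neg, inv_mul_cancel₀ hd] at this

lemma tendsto_conjNeg (ha : h a = 0) : Tendsto (hh.conjNeg hd) (𝓝 a) (𝓝 a) := by
  simpa only [conjNeg_self hh hd ha] using (hh.hasDerivAt_conjNeg hd ha).continuousAt.tendsto

lemma analyticAt_conjNeg [CharZero 𝕜] (ha : h a = 0) : AnalyticAt 𝕜 (hh.conjNeg hd) a := by
  have hinv := hh.analyticAt_localInverse hd
  rw [ha, ← neg_zero, ← ha] at hinv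
  exact hinv.comp (f := fun z => -h z) hh.fun_neg

lemma eventually_comp_conjNeg (ha : h a = 0) : ∀ᶠ z in 𝓝 a, h (hh.conjNeg hd z) = -h z := by
  have hneg : Tendsto (fun z => -h z) (𝓝 a) (𝓝 (h a)) := by
    simpa [ha] using hh.fun_neg.continuousAt.tendsto
  exact hneg.eventually (hh.hasStrictDerivAt.eventually_right_inverse hd)

lemma eventually_conjNeg_conjNeg (ha : h a = 0) :
    ∀ᶠ z in 𝓝 a, hh.conjNeg hd (hh.conjNeg hd z) = z := by
  filter_upwards [hh.eventually_comp_conjNeg hd ha,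
    hh.hasStrictDerivAt.eventually_left_inverse hd] with z h₁ h₂
  simp only [conjNeg] at h₁ ⊢
  rw [h₁, neg_neg, h₂]

lemma eventually_conjNeg_ne [CharZero 𝕜] (ha : h a = 0) :
    ∀ᶠ z in 𝓝 a, z ≠ a → hh.conjNeg hd z ≠ z := by
  filter_upwards [hh.eventually_comp_conjNeg hd ha,
    hh.hasStrictDerivAt.eventually_left_inverse hd] with z h₁ h₂ hza hfix
  rw [hfix] at h₁
  have hz : h z = h a := by rw [ha]; linear_combination h₁ / 2
  exact hza (by rw [← h₂, hz, hh.localInverse_apply_self hd])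

lemma eventually_comp_conjNeg_of_eventuallyEq_sq (ha : h a = 0) {f : 𝕜 → 𝕜}
    (hf : f =ᶠ[𝓝 a] fun z => h z ^ 2) : ∀ᶠ z in 𝓝 a, f (hh.conjNeg hd z) = f z := by
  filter_upwards [hf, (hh.tendsto_conjNeg hd ha).eventually hf, hh.eventually_comp_conjNeg hd ha]
    with z h₁ h₂ h₃
  rw [h₁, h₂, h₃, neg_sq]

end AnalyticAt

end ConjNeg

lemma iteratedDeriv_succ_log_one_sub_zero (n : ℕ) :
    iteratedDeriv (n + 1) (fun z : ℂ => Complex.log (1 - z)) 0 = -n ! := by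
  rw [iteratedDeriv_comp_const_sub]
  simp [iteratedDeriv_succ_log, pow_succ, ← mul_assoc, ← mul_pow]

lemma analyticAt_log_one_sub_zero : AnalyticAt ℂ (fun z : ℂ => Complex.log (1 - z)) 0 :=
  (analyticAt_clog (by simp)).comp (f := fun z : ℂ => 1 - z) (by fun_prop)

lemma iteratedDeriv_succ_add_log_one_sub_zero (n : ℕ) :
    iteratedDeriv (n + 1) (fun z : ℂ => z + Complex.log (1 - z)) 0 =
      (if n = 0 then 1 else 0) - n ! := by
  rw [iteratedDeriv_fun_add (f := fun z => z) contDiffAt_id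
      analyticAt_log_one_sub_zero.contDiffAt,
    iteratedDeriv_fun_id_zero, iteratedDeriv_succ_log_one_sub_zero, sub_eq_add_neg]
  simp

/-- there are ε > 0 and a holomorphic function ψ on the disk {|Δ| < ε}
with ψ(0) = 0, ψ'(0) = −1, ψ''(0) = −4/3, satisfying
ψ(Δ) + Log(1−ψ(Δ)) = Δ + Log(1−Δ) for |Δ| < ε, with ψ(Δ) ≠ Δ for 0 ≠ Δ, |Δ| < ε,
and ψ∘ψ = id on a possibly smaller disk of radius ε' ≤ ε. -/
theorem stmt6 :
    ∃ ε : ℝ, 0 < ε ∧ ∃ ψ : ℂ → ℂ,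
      (∀ Δ ∈ Metric.ball (0 : ℂ) ε, AnalyticAt ℂ ψ Δ) ∧
      ψ 0 = 0 ∧ deriv ψ 0 = -1 ∧ iteratedDeriv 2 ψ 0 = -(4 / 3) ∧
      (∀ Δ : ℂ, ‖Δ‖ < ε →
        ψ Δ + Complex.log (1 - ψ Δ) = Δ + Complex.log (1 - Δ)) ∧
      (∀ Δ : ℂ, ‖Δ‖ < ε → Δ ≠ 0 → ψ Δ ≠ Δ) ∧
      ∃ ε' : ℝ, 0 < ε' ∧ ε' ≤ ε ∧ ∀ Δ : ℂ, ‖Δ‖ < ε' → ψ (ψ Δ) = Δ := by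
  set F : ℂ → ℂ := fun z => z + Complex.log (1 - z)
  have hF : AnalyticAt ℂ F 0 := analyticAt_id.add analyticAt_log_one_sub_zero
  have hF₁ : deriv F 0 = 0 := by simpa using iteratedDeriv_succ_add_log_one_sub_zero 0
  have hF₂ : iteratedDeriv 2 F 0 = -1 := by simpa using iteratedDeriv_succ_add_log_one_sub_zero 1
  have hF₃ : iteratedDeriv 3 F 0 = -2 := by simpa using iteratedDeriv_succ_add_log_one_sub_zero 2
  obtain ⟨h, hh, h₀, hd, hFh⟩ :=
    hF.exists_eventuallyEq_sq_of_iteratedDeriv_two_ne_zero (by simp [F]) hF₁ (by simp [hF₂])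
  set ψ := hh.conjNeg hd
  have hψ : AnalyticAt ℂ ψ 0 := hh.analyticAt_conjNeg hd h₀
  have hψ₁ : deriv ψ 0 = -1 := (hh.hasDerivAt_conjNeg hd h₀).deriv
  have hFψ := hh.eventually_comp_conjNeg_of_eventuallyEq_sq hd h₀ hFh
  have hψ₂ := mul_iteratedDeriv_two_of_comp_eventuallyEq hF.contDiffAt hψ.contDiffAt
    (hh.conjNeg_self hd h₀) hψ₁ hF₁ hFψ
  obtain ⟨ε, hε, hball⟩ := Metric.eventually_nhds_iff_ball.1
    (hψ.eventually_analyticAt.and (hFψ.and (hh.eventually_conjNeg_ne hd h₀)))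
  obtain ⟨ε', hε', hball'⟩ :=
    Metric.eventually_nhds_iff_ball.1 (hh.eventually_conjNeg_conjNeg hd h₀)
  refine ⟨ε, hε, ψ, fun Δ hΔ => (hball Δ hΔ).1, hh.conjNeg_self hd h₀, hψ₁,
    by rw [hF₂, hF₃] at hψ₂; linear_combination -hψ₂ / 3,
    fun Δ hΔ => (hball Δ (mem_ball_zero_iff.2 hΔ)).2.1,
    fun Δ hΔ => (hball Δ (mem_ball_zero_iff.2 hΔ)).2.2,
    min ε' ε, lt_min hε' hε, min_le_right _ _,
    fun Δ hΔ => hball' Δ (mem_ball_zero_iff.2 (hΔ.trans_le (min_le_left _ _)))⟩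
end

section
/- (Polynomial reduction of holomorphic functions.) Let U ⊆ ℂ be an open set and let p ∈ ℂ[X] be a nonconstant polynomial all of whose roots lie in U. Then for every analytic function f : U → ℂ there exists a unique polynomial q ∈ ℂ[X] with deg q < deg p such that f(ζ) − q(ζ) = p(ζ)·h(ζ) for some analytic function h : U → ℂ. -/
/-!
Over ℂ the polynomial `p` factors as `c · ∏ (X - a)` with every `a ∈ U`, so both halves go by
induction, peeling off one linear factor at a time.  For existence, `f = f a + (z - a) · dslope f a` with
`dslope f a` again analytic on `U` (a removable singularity), and a reduction of `dslope f a`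
modulo the cofactor gives one of `f` modulo `p`.  For uniqueness, if a polynomial `d` with
`deg d < deg p` is `p · h` on `U`, then `d a = 0`, so `d = (X - a) · e`, and cancelling `z - a`
(off `a`, then at `a` by continuity) shows that `e` is divisible by the cofactor; hence `d = 0`.
-/

open Polynomial

/-- The congruence `f ≡ g (mod p)` of analytic functions on `U` is `AnalyticDvdOn U p (f - g)`. -/
def AnalyticDvdOn (U : Set ℂ) (p : ℂ[X]) (f : ℂ → ℂ) : Prop :=
  ∃ h : ℂ → ℂ, AnalyticOnNhd ℂ h U ∧ ∀ z ∈ U, f z = p.eval z * h z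

theorem AnalyticDvdOn.sub {U : Set ℂ} {p : ℂ[X]} {f g : ℂ → ℂ} (hf : AnalyticDvdOn U p f)
    (hg : AnalyticDvdOn U p g) : AnalyticDvdOn U p (fun z => f z - g z) := by
  obtain ⟨h, hh, hfh⟩ := hf
  obtain ⟨k, hk, hgk⟩ := hg
  exact ⟨fun z => h z - k z, fun z hz => (hh z hz).sub (hk z hz),
    fun z hz => by simp only [hfh z hz, hgk z hz, mul_sub]⟩

theorem AnalyticDvdOn.of_X_sub_C_mul {U : Set ℂ} (hU : IsOpen U) {a : ℂ} (ha : a ∈ U)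
    {r : ℂ[X]} {g : ℂ → ℂ} (hg : ContinuousAt g a)
    (hdvd : AnalyticDvdOn U ((X - C a) * r) (fun z => (z - a) * g z)) : AnalyticDvdOn U r g := by
  obtain ⟨h, hh, hgh⟩ := hdvd
  have off_a : ∀ z ∈ U, z ≠ a → g z = r.eval z * h z := fun z hz hza => by
    refine mul_left_cancel₀ (sub_ne_zero.mpr hza) ?_
    simpa [mul_assoc] using hgh z hz
  have at_a : g a = r.eval a * h a := by
    have hcont : ContinuousAt (fun z => r.eval z * h z) a :=
      r.continuousAt.mul (hh a ha).continuousAt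
    refine ((hg.eventuallyEq_nhds_iff_eventuallyEq_nhdsNE hcont).mp ?_).eq_of_nhds
    filter_upwards [self_mem_nhdsWithin, mem_nhdsWithin_of_mem_nhds (hU.mem_nhds ha)]
      with z hza hz using off_a z hz hza
  refine ⟨h, hh, fun z hz => ?_⟩
  rcases eq_or_ne z a with rfl | hza
  exacts [at_a, off_a z hz hza]

theorem AnalyticOnNhd.dslope {U : Set ℂ} (hU : IsOpen U) {f : ℂ → ℂ}
    (hf : AnalyticOnNhd ℂ f U) {a : ℂ} (ha : a ∈ U) : AnalyticOnNhd ℂ (dslope f a) U :=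
  ((Complex.differentiableOn_dslope (hU.mem_nhds ha)).mpr hf.differentiableOn).analyticOnNhd hU

theorem Polynomial.induction_on_roots_mem {k : Type*} [Field k] [IsAlgClosed k] {U : Set k}
    {P : k[X] → Prop} (h_C : ∀ c ≠ 0, P (C c))
    (h_mul : ∀ a ∈ U, ∀ r, P r → P ((X - C a) * r))
    {p : k[X]} (hp : p ≠ 0) (hroots : ∀ z, p.eval z = 0 → z ∈ U) : P p := by
  have hU : ∀ a ∈ p.roots, a ∈ U := fun a ha => hroots a (isRoot_of_mem_roots ha)
  rw [← C_leadingCoeff_mul_prod_multiset_X_sub_C (p := p) IsAlgClosed.card_roots_eq_natDegree]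
  have hc := leadingCoeff_ne_zero.mpr hp
  generalize p.roots = s at hU
  induction s using Multiset.induction_on with
  | empty => simpa using h_C _ hc
  | cons a s ih =>
    rw [Multiset.map_cons, Multiset.prod_cons, mul_left_comm]
    exact h_mul a (hU a (Multiset.mem_cons_self a s)) _
      (ih fun b hb => hU b (Multiset.mem_cons_of_mem hb))

theorem exists_degree_lt_analyticDvdOn_sub {U : Set ℂ} (hU : IsOpen U) {p : ℂ[X]} (hp : p ≠ 0)
    (hroots : ∀ z, p.eval z = 0 → z ∈ U) {f : ℂ → ℂ} (hf : AnalyticOnNhd ℂ f U) :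
    ∃ q : ℂ[X], q.degree < p.degree ∧ AnalyticDvdOn U p (fun z => f z - q.eval z) := by
  refine induction_on_roots_mem (P := fun p => ∀ g : ℂ → ℂ, AnalyticOnNhd ℂ g U →
    ∃ q : ℂ[X], q.degree < p.degree ∧ AnalyticDvdOn U p (fun z => g z - q.eval z))
    (fun c hc g hg => ?_) (fun a ha r ih g hg => ?_) hp hroots f hf
  · refine ⟨0, by simp [degree_C hc], fun z => c⁻¹ * g z,
      fun z hz => analyticAt_const.mul (hg z hz), fun z _ => ?_⟩
    simp [hc]
  · obtain ⟨q, hq, h, hh, hdslope⟩ := ih (dslope g a) (hg.dslope hU ha)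
    have hr : r ≠ 0 := ne_zero_of_degree_gt hq
    have hdeg : ((X - C a) * q).degree < ((X - C a) * r).degree := by
      rw [degree_mul, degree_mul]
      exact WithBot.add_lt_add_left (by simp) hq
    have hpos : 0 < ((X - C a) * r).degree :=
      degree_pos_of_root (a := a) (mul_ne_zero (X_sub_C_ne_zero a) hr) (by simp)
    refine ⟨C (g a) + (X - C a) * q,
      (degree_add_le _ _).trans_lt (max_lt (degree_C_le.trans_lt hpos) hdeg), h, hh,
      fun z hz => ?_⟩
    have hslope : g z - g a = (z - a) * dslope g a z := (sub_smul_dslope g a z).symm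
    simp only [eval_add, eval_mul, eval_sub, eval_X, eval_C]
    linear_combination hslope + (z - a) * hdslope z hz

theorem eq_zero_of_analyticDvdOn_of_degree_lt {U : Set ℂ} (hU : IsOpen U) {p : ℂ[X]}
    (hp : p ≠ 0) (hroots : ∀ z, p.eval z = 0 → z ∈ U) {d : ℂ[X]} (hd : d.degree < p.degree)
    (hdvd : AnalyticDvdOn U p (eval · d)) : d = 0 := by
  refine induction_on_roots_mem (P := fun p => ∀ d : ℂ[X], d.degree < p.degree →
    AnalyticDvdOn U p (eval · d) → d = 0)
    (fun c hc e he _ => ?_) (fun a ha r ih e he hdvde => ?_) hp hroots d hd hdvd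
  · simpa [degree_C hc] using he
  · have hroot : e.IsRoot a := by
      obtain ⟨h, -, heh⟩ := hdvde
      simpa using heh a ha
    obtain ⟨e, rfl⟩ := dvd_iff_isRoot.mpr hroot
    have hdeg : e.degree < r.degree := by
      rwa [degree_mul, degree_mul, WithBot.add_lt_add_iff_left (by simp)] at he
    simp only [eval_mul, eval_sub, eval_X, eval_C] at hdvde
    rw [ih e hdeg (hdvde.of_X_sub_C_mul hU ha e.continuousAt), mul_zero]

/-- polynomial reduction of holomorphic functions: if U ⊆ ℂ is open and
p is a nonconstant polynomial all of whose roots lie in U, then every analytic function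
f on U is congruent modulo p, in the analytic functions on U, to a unique polynomial q
of degree < deg p. -/
theorem stmt8 (U : Set ℂ) (hU : IsOpen U) (p : Polynomial ℂ) (hp : 0 < p.natDegree)
    (hroots : ∀ z : ℂ, Polynomial.eval z p = 0 → z ∈ U)
    (f : ℂ → ℂ) (hf : ∀ z ∈ U, AnalyticAt ℂ f z) :
    ∃! q : Polynomial ℂ, q.natDegree < p.natDegree ∧
      ∃ h : ℂ → ℂ, (∀ z ∈ U, AnalyticAt ℂ h z) ∧
        ∀ z ∈ U, f z - Polynomial.eval z q = Polynomial.eval z p * h z := by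
  have hp0 : p ≠ 0 := ne_zero_of_natDegree_gt hp
  obtain ⟨q, hq, hfq⟩ := exists_degree_lt_analyticDvdOn_sub hU hp0 hroots hf
  refine ⟨q, ⟨?_, hfq⟩, fun q' ⟨hq', hfq'⟩ => ?_⟩
  · rcases eq_or_ne q 0 with rfl | hq0
    exacts [hp, natDegree_lt_natDegree hq0 hq]
  · have hdeg : (q' - q).degree < p.degree :=
      (degree_sub_le q' q).trans_lt (max_lt (degree_lt_degree hq') hq)
    have hdvd : AnalyticDvdOn U p (eval · (q' - q)) := by
      simpa using hfq.sub hfq'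
    exact sub_eq_zero.mp (eq_zero_of_analyticDvdOn_of_degree_lt hU hp0 hroots hdeg hdvd)
end

section
/- (Residue formula for the principal part.) Let r ≥ 1 and k ≥ 1 be integers, let α_1, …, α_r be the r-th roots of unity, and let U ⊆ ℂ be an open set containing all of them. Let h : U → ℂ be analytic, and let q be the unique polynomial of degree < rk such that h(ζ) − q(ζ) = (1−ζ^r)^k·h_1(ζ) for some analytic h_1 on U. Then for every η ∈ ℂ with η^r ≠ 1 and every choice of radii ρ_1, …, ρ_r > 0 such that the closed disks D̄(α_j, ρ_j) are pairwise disjoint, contained in U, and none of them contains η, one has Σ_{j=1}^r (1/(2πi))·∮_{|ζ−α_j|=ρ_j} h(ζ)/((1−ζ^r)^k·(ζ−η)) dζ = − q(η)/(1−η^r)^k. -/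
/-!
Write `h = q + (1 - ζ^r)^k h₁`. The term `h₁ / (ζ - η)` is holomorphic on every disk, so only
the rational function `q / ((1 - ζ^r)^k (ζ - η))` contributes, and `1 / 2πi` times its
integral over the `j`-th circle is its residue at `α_j`. Its denominator has degree `rk + 1`
while `deg q < rk`, so in the partial fraction decomposition the residues (the coefficients of
the `1 / (ζ - pole)` terms) add up to the coefficient of `X^{rk}` in `q`, which is zero. Hence
the residues at the roots of unity sum to minus the residue at the simple pole `η`, which is
`q(η) / (1 - η^r)^k`.
-/

open Polynomial Finset

namespace Polynomial

section PartialFractions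

variable {R : Type*} [CommRing R] {ι : Type*} [DecidableEq ι] {s : Finset ι} {g r : ι → R[X]}

theorem degree_sum_mul_prod_erase_lt [Nontrivial R] (hg : ∀ i ∈ s, (g i).Monic)
    (hr : ∀ i ∈ s, (r i).degree < (g i).degree) :
    (∑ i ∈ s, r i * ∏ j ∈ s.erase i, g j).degree < (∏ i ∈ s, g i).degree := by
  refine (degree_sum_le _ _).trans_lt ((Finset.sup_lt_iff ?_).2 fun i hi => ?_)
  · exact bot_lt_iff_ne_bot.2 (degree_ne_bot.2 (monic_prod_of_monic _ _ hg).ne_zero)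
  · have hmonic : (∏ j ∈ s.erase i, g j).Monic :=
      monic_prod_of_monic _ _ fun j hj => hg j (mem_of_mem_erase hj)
    rw [← mul_prod_erase s g hi, hmonic.degree_mul, hmonic.degree_mul]
    exact WithBot.add_lt_add_right (degree_ne_bot.2 hmonic.ne_zero) (hr i hi)

theorem exists_eq_sum_mul_prod_erase [Nontrivial R] (hg : ∀ i ∈ s, (g i).Monic)
    (hgg : Set.Pairwise s fun i j => IsCoprime (g i) (g j)) {f : R[X]}
    (hf : f.degree < (∏ i ∈ s, g i).degree) :
    ∃ r : ι → R[X], (∀ i ∈ s, (r i).degree < (g i).degree) ∧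
      f = ∑ i ∈ s, r i * ∏ j ∈ s.erase i, g j := by
  obtain ⟨q, r, hr, hfqr⟩ := eq_quo_mul_prod_add_sum_rem_mul_prod f hg hgg
  refine ⟨r, hr, ?_⟩
  have hdvd : ∏ i ∈ s, g i ∣ f - ∑ i ∈ s, r i * ∏ j ∈ s.erase i, g j :=
    ⟨q, by rw [hfqr]; ring⟩
  have hlt : (f - ∑ i ∈ s, r i * ∏ j ∈ s.erase i, g j).degree < (∏ i ∈ s, g i).degree :=
    (degree_sub_le _ _).trans_lt (max_lt hf (degree_sum_mul_prod_erase_lt hg hr))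
  by_contra hne
  exact (monic_prod_of_monic _ _ hg).not_dvd_of_degree_lt (sub_ne_zero.2 hne) hlt hdvd

theorem coeff_sum_mul_prod_erase (hg : ∀ i ∈ s, (g i).Monic)
    (hr : ∀ i ∈ s, (r i).degree < (g i).degree) :
    (∑ i ∈ s, r i * ∏ j ∈ s.erase i, g j).coeff ((∏ i ∈ s, g i).natDegree - 1) =
      ∑ i ∈ s, (r i).coeff ((g i).natDegree - 1) := by
  rw [finsetSum_coeff]
  refine sum_congr rfl fun i hi => ?_
  by_cases hri : r i = 0
  · simp [hri]
  have hmonic : (∏ j ∈ s.erase i, g j).Monic :=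
    monic_prod_of_monic _ _ fun j hj => hg j (mem_of_mem_erase hj)
  have hlt : (r i).natDegree < (g i).natDegree := natDegree_lt_natDegree hri (hr i hi)
  have hidx : (∏ i ∈ s, g i).natDegree - 1 =
      ((g i).natDegree - 1) + (∏ j ∈ s.erase i, g j).natDegree := by
    rw [← mul_prod_erase s g hi, (hg i hi).natDegree_mul hmonic]
    omega
  rw [hidx, coeff_mul_add_eq_of_natDegree_le (by omega) le_rfl, hmonic.coeff_natDegree, mul_one]

theorem eval_sum_mul_prod_erase_of_isRoot {i : ι} (hi : i ∈ s) {z : R} (hz : (g i).IsRoot z) :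
    (∑ j ∈ s, r j * ∏ l ∈ s.erase j, g l).eval z =
      (r i).eval z * ∏ l ∈ s.erase i, (g l).eval z := by
  rw [eval_finsetSum, sum_eq_single_of_mem i hi fun j hj hji => ?_, eval_mul, eval_prod]
  rw [eval_mul, eval_prod, prod_eq_zero (mem_erase.2 ⟨Ne.symm hji, hi⟩) hz.eq_zero, mul_zero]

end PartialFractions

section FieldPartialFractions

variable {K : Type*} [Field K] {ι : Type*} [DecidableEq ι] {s : Finset ι} {g r : ι → K[X]}

theorem eval_sum_mul_prod_erase_div {z : K} (hz : ∀ i ∈ s, (g i).eval z ≠ 0) :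
    (∑ j ∈ s, r j * ∏ l ∈ s.erase j, g l).eval z / ∏ i ∈ s, (g i).eval z =
      ∑ i ∈ s, (r i).eval z / (g i).eval z := by
  rw [eval_finsetSum, sum_div]
  refine sum_congr rfl fun i hi => ?_
  rw [eval_mul, eval_prod, ← mul_prod_erase s _ hi,
    mul_div_mul_right _ _ (prod_ne_zero_iff.2 fun j hj => hz j (mem_of_mem_erase hj))]

theorem eq_C_of_degree_lt_one_of_isRoot {i : ι} (hi : i ∈ s) (hri : (r i).degree < 1) {z : K}
    (hz : (g i).IsRoot z) (hne : ∏ l ∈ s.erase i, (g l).eval z ≠ 0) :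
    r i = C ((∑ j ∈ s, r j * ∏ l ∈ s.erase j, g l).eval z /
      ∏ l ∈ s.erase i, (g l).eval z) := by
  obtain ⟨c, hc⟩ : ∃ c, r i = C c :=
    ⟨_, eq_C_of_degree_le_zero (Nat.WithBot.lt_one_iff_le_zero.1 hri)⟩
  rw [eval_sum_mul_prod_erase_of_isRoot hi hz, mul_div_cancel_right₀ _ hne, hc, eval_C]

end FieldPartialFractions

section LinearFactors

variable {K : Type*} [Field K] {ι : Type*} [Fintype ι] [DecidableEq ι] {β : ι → K}
  {m : ι → ℕ}

theorem exists_eq_sum_mul_prod_erase_X_sub_C_pow (hβ : Function.Injective β) {f : K[X]}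
    (hf : f.degree < ∑ i, m i) :
    ∃ r : ι → K[X], (∀ i, (r i).degree < m i) ∧
      f = ∑ i, r i * ∏ j ∈ univ.erase i, (X - C (β j)) ^ m j := by
  have hg : ∀ i ∈ univ, ((X - C (β i)) ^ m i).Monic := fun i _ => (monic_X_sub_C _).pow _
  obtain ⟨r, hr, hfr⟩ := exists_eq_sum_mul_prod_erase hg
    (fun i _ j _ hij => ((pairwise_coprime_X_sub_C hβ) hij).pow) (f := f)
    (by simpa [degree_eq_natDegree (monic_prod_of_monic _ _ hg).ne_zero,
      natDegree_prod_of_monic _ _ hg] using hf)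
  exact ⟨r, fun i => by simpa using hr i (mem_univ i), hfr⟩

theorem coeff_sum_mul_prod_erase_X_sub_C_pow {r : ι → K[X]} (hr : ∀ i, (r i).degree < m i) :
    (∑ i, r i * ∏ j ∈ univ.erase i, (X - C (β j)) ^ m j).coeff ((∑ i, m i) - 1) =
      ∑ i, (r i).coeff (m i - 1) := by
  have hg : ∀ i ∈ univ, ((X - C (β i)) ^ m i).Monic := fun i _ => (monic_X_sub_C _).pow _
  simpa [natDegree_prod_of_monic _ _ hg] using
    coeff_sum_mul_prod_erase hg fun i _ => by simpa using hr i

end LinearFactors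

theorem exists_partialFractions_div_sub_mul_prod_sub_pow {K : Type*} [Field K] {ι : Type*}
    [Fintype ι] [DecidableEq ι] {β : ι → K} (hβ : Function.Injective β) {η : K}
    (hη : ∀ i, β i ≠ η) (m : ι → ℕ) {f : K[X]} (hf : f.degree < ∑ i, m i) :
    ∃ r : ι → K[X], (∀ i, (r i).degree < m i) ∧
      ∑ i, (r i).coeff (m i - 1) = -(f.eval η / ∏ i, (η - β i) ^ m i) ∧
      ∀ z, z ≠ η → (∀ i, z ≠ β i) →
        f.eval z / ((z - η) * ∏ i, (z - β i) ^ m i) =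
          f.eval η / (∏ i, (η - β i) ^ m i) / (z - η) +
            ∑ i, (r i).eval z / (z - β i) ^ m i := by
  classical
  -- `η` joins the poles as the index `none`, with multiplicity one.
  set β' : Option ι → K := fun o => o.elim η β
  set m' : Option ι → ℕ := fun o => o.elim 1 m
  have hβ' : Function.Injective β' := by
    rintro (_ | i) (_ | j) h
    · rfl
    · exact absurd h.symm (hη j)
    · exact absurd h (hη i)
    · exact congrArg some (hβ h)
  have hm' : ∑ o, m' o = (∑ i, m i) + 1 := by simp [m', Fintype.sum_option, add_comm]
  obtain ⟨r, hr, hfr⟩ := exists_eq_sum_mul_prod_erase_X_sub_C_pow hβ' (f := f)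
    (by rw [hm']; exact hf.trans (by exact_mod_cast Nat.lt_succ_self _))
  have hP :
      ∏ o ∈ univ.erase none, ((X - C (β' o)) ^ m' o).eval η = ∏ i, (η - β i) ^ m i := by
    rw [show univ.erase none = univ.map Function.Embedding.some by ext (_ | i) <;> simp, prod_map]
    simp [β', m']
  have hres : r none = C (f.eval η / ∏ i, (η - β i) ^ m i) := by
    have hP0 : ∏ i, (η - β i) ^ m i ≠ 0 :=
      prod_ne_zero_iff.2 fun i _ => pow_ne_zero _ (sub_ne_zero.2 (hη i).symm)
    rw [eq_C_of_degree_lt_one_of_isRoot (r := r) (mem_univ none) (hr none) (by simp [β', m'])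
      (hP ▸ hP0), ← hfr, hP]
  refine ⟨fun i => r (some i), fun i => hr (some i), ?_, fun z hzη hzβ => ?_⟩
  · have hcoeff := coeff_sum_mul_prod_erase_X_sub_C_pow (β := β') hr
    rw [← hfr, hm', Nat.add_sub_cancel, coeff_eq_zero_of_degree_lt hf,
      Fintype.sum_option] at hcoeff
    simp only [m', Option.elim, Nat.sub_self, hres, coeff_C_zero] at hcoeff
    linear_combination -hcoeff
  · have hz : ∀ o ∈ univ, ((X - C (β' o)) ^ m' o).eval z ≠ 0 := by
      rintro (_ | i) _ <;> simp [β', m', sub_eq_zero, hzη, hzβ]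
    have heval := eval_sum_mul_prod_erase_div (r := r) hz
    rw [← hfr, Fintype.prod_option, Fintype.sum_option] at heval
    simp only [β', m', hres, Option.elim, eval_pow, eval_sub, eval_X, eval_C, pow_one] at heval
    exact heval

theorem prod_X_sub_C_eq_X_pow_sub_one {K : Type*} [Field K] {n : ℕ} (hn : n ≠ 0)
    {α : Fin n → K} (hinj : Function.Injective α) (hroot : ∀ j, α j ^ n = 1) :
    ∏ j, (X - C (α j)) = X ^ n - 1 := by
  have hmonic := monic_X_pow_sub_C (1 : K) hn
  rw [map_one] at hmonic
  refine (eq_of_monic_of_dvd_of_natDegree_le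
    (monic_prod_of_monic _ _ fun j _ => monic_X_sub_C (α j)) hmonic ?_ ?_).symm
  · refine prod_dvd_of_coprime ((pairwise_coprime_X_sub_C hinj).set_pairwise _) fun j _ => ?_
    simp [dvd_iff_isRoot, hroot j]
  · rw [← map_one C, natDegree_X_pow_sub_C,
      natDegree_prod_of_monic _ _ fun j _ => monic_X_sub_C (α j)]
    simp

theorem prod_sub_eq_pow_sub_one {K : Type*} [Field K] {n : ℕ} (hn : n ≠ 0)
    {α : Fin n → K} (hinj : Function.Injective α) (hroot : ∀ j, α j ^ n = 1) (z : K) :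
    ∏ j, (z - α j) = z ^ n - 1 := by
  simpa [eval_prod] using congrArg (eval z) (prod_X_sub_C_eq_X_pow_sub_one hn hinj hroot)

theorem pow_ne_one_of_forall_ne {K : Type*} [Field K] {n : ℕ} (hn : n ≠ 0) {α : Fin n → K}
    (hinj : Function.Injective α) (hroot : ∀ j, α j ^ n = 1) {z : K} (hz : ∀ j, z ≠ α j) :
    z ^ n ≠ 1 := by
  rw [Ne, ← sub_eq_zero, ← prod_sub_eq_pow_sub_one hn hinj hroot]
  exact prod_ne_zero_iff.2 fun j _ => sub_ne_zero.2 (hz j)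

theorem exists_partialFractions_div_one_sub_pow_mul_sub {K : Type*} [Field K] {r : ℕ}
    {α : Fin r → K} (hinj : Function.Injective α) (hroot : ∀ j, α j ^ r = 1) {η : K}
    (hη : η ^ r ≠ 1) (k : ℕ) {q : K[X]} (hq : q.natDegree < r * k) :
    ∃ pf : Fin r → K[X], (∀ j, (pf j).degree < k) ∧
      ∑ j, (pf j).coeff (k - 1) = -(q.eval η / (1 - η ^ r) ^ k) ∧
      ∀ z, z ≠ η → z ^ r ≠ 1 →
        q.eval z / ((1 - z ^ r) ^ k * (z - η)) =
          q.eval η / (1 - η ^ r) ^ k / (z - η) + ∑ j, (pf j).eval z / (z - α j) ^ k := by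
  have hr : r ≠ 0 := by rintro rfl; exact hη (pow_zero η)
  have hprod : ∀ z, ∏ j, (z - α j) ^ k = (-1) ^ k * (1 - z ^ r) ^ k := fun z => by
    rw [prod_pow, prod_sub_eq_pow_sub_one hr hinj hroot, ← mul_pow]
    ring
  have hsign : ((-1 : K) ^ k) ≠ 0 := pow_ne_zero _ (neg_ne_zero.2 one_ne_zero)
  have hdeg : (C ((-1 : K) ^ k) * q).degree < ∑ _j : Fin r, k := by
    rw [degree_C_mul hsign]
    refine degree_le_natDegree.trans_lt ?_
    simpa using mod_cast hq
  have hαη : ∀ j, α j ≠ η := fun j h => hη (h ▸ hroot j)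
  obtain ⟨pf, hpf, hsum, heval⟩ := exists_partialFractions_div_sub_mul_prod_sub_pow hinj
    hαη (fun _ => k) hdeg
  refine ⟨pf, hpf, ?_, fun z hzη hz => ?_⟩
  · rw [hsum, hprod, eval_mul, eval_C, mul_div_mul_left _ _ hsign]
  · have := heval z hzη fun j h => hz (h ▸ hroot j)
    simp only [hprod, eval_mul, eval_C] at this
    rwa [mul_left_comm, mul_div_mul_left _ _ hsign, mul_div_mul_left _ _ hsign,
      mul_comm (z - η)] at this

theorem coeff_taylor_pred_of_degree_lt {R : Type*} [CommSemiring R] {p : R[X]} {m : ℕ}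
    (hp : p.degree < m) (c : R) : (taylor c p).coeff (m - 1) = p.coeff (m - 1) := by
  have hp' : p.natDegree ≤ m - 1 := by
    rcases eq_or_ne p 0 with rfl | hp0
    · simp
    · have := (natDegree_lt_iff_degree_lt hp0).2 hp; omega
  have hconst : (hasseDeriv (m - 1) p).natDegree = 0 := by
    have := natDegree_hasseDeriv_le p (m - 1); omega
  rw [taylor_coeff, eq_C_of_natDegree_eq_zero hconst, eval_C, hasseDeriv_coeff]
  simp

end Polynomial

open Polynomial Complex Metric Real

theorem circleIntegral_eval_div_sub_pow {c : ℂ} {R : ℝ} (hR : 0 < R) {m : ℕ} {p : ℂ[X]}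
    (hp : p.degree < m) :
    (∮ z in C(c, R), p.eval z / (z - c) ^ m) = 2 * π * I * p.coeff (m - 1) := by
  rcases eq_or_ne p 0 with rfl | hp0
  · simp [circleIntegral]
  have hpm : (taylor c p).natDegree < m := by
    rw [natDegree_taylor]; exact (natDegree_lt_iff_degree_lt hp0).2 hp
  have hexpand : Set.EqOn (fun z => p.eval z / (z - c) ^ m)
      (fun z => ∑ n ∈ range m, (taylor c p).coeff n * (z - c) ^ ((n : ℤ) - m))
      (sphere c R) := by
    intro z hz
    have hzc : z - c ≠ 0 := sub_ne_zero.2 (ne_of_mem_sphere hz hR.ne')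
    simp only
    rw [← taylor_eval_sub c p z, eval_eq_sum_range' hpm, sum_div]
    refine sum_congr rfl fun n _ => ?_
    rw [zpow_sub₀ hzc, zpow_natCast, zpow_natCast, mul_div_assoc]
  have hint : ∀ n ∈ range m,
      CircleIntegrable (fun z => (taylor c p).coeff n * (z - c) ^ ((n : ℤ) - m)) c R :=
    fun n _ => (circleIntegrable_sub_zpow_iff.2
      (Or.inr (Or.inr (by simpa [abs_of_pos hR] using hR.ne)))).const_mul _
  rw [circleIntegral.integral_congr hR.le hexpand, circleIntegral.integral_fun_sum hint,
    sum_eq_single_of_mem (m - 1) (by simp; omega) fun n hn hne => ?_]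
  · rw [circleIntegral.integral_const_mul, show ((m - 1 : ℕ) : ℤ) - m = -1 by omega]
    simp only [zpow_neg_one]
    rw [circleIntegral.integral_sub_inv_of_mem_ball (mem_ball_self hR),
      coeff_taylor_pred_of_degree_lt hp]
    ring
  · rw [circleIntegral.integral_const_mul,
      circleIntegral.integral_sub_zpow_of_ne (by simp at hn; omega), mul_zero]

theorem circleIntegral_add_eval_div_sub_pow {G : ℂ → ℂ} {c : ℂ} {R : ℝ} (hR : 0 < R)
    (hG : DifferentiableOn ℂ G (closedBall c R)) {m : ℕ} {p : ℂ[X]} (hp : p.degree < m) :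
    (∮ z in C(c, R), (G z + p.eval z / (z - c) ^ m)) = 2 * π * I * p.coeff (m - 1) := by
  have hGint : CircleIntegrable G c R :=
    (hG.continuousOn.mono sphere_subset_closedBall).circleIntegrable hR.le
  have hpint : CircleIntegrable (fun z => p.eval z / (z - c) ^ m) c R :=
    ContinuousOn.circleIntegrable hR.le <| p.continuous.continuousOn.div
      ((continuous_id.sub continuous_const).pow m).continuousOn fun z hz =>
        pow_ne_zero _ (sub_ne_zero.2 (ne_of_mem_sphere hz hR.ne'))
  rw [circleIntegral.integral_add hGint hpint,
    (hG.mono closure_ball_subset_closedBall).diffContOnCl.circleIntegral_eq_zero hR.le, zero_add,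
    circleIntegral_eval_div_sub_pow hR hp]

theorem circleIntegral_add_sum_eval_div_sub_pow {ι : Type*} [DecidableEq ι] {s : Finset ι}
    {β : ι → ℂ} {m : ι → ℕ} {r : ι → ℂ[X]} {G : ℂ → ℂ} {i : ι} {R : ℝ}
    (hi : i ∈ s) (hR : 0 < R) (hG : DifferentiableOn ℂ G (closedBall (β i) R))
    (hβ : ∀ j ∈ s, j ≠ i → β j ∉ closedBall (β i) R) (hr : (r i).degree < m i) :
    (∮ z in C(β i, R), (G z + ∑ j ∈ s, (r j).eval z / (z - β j) ^ m j)) =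
      2 * π * I * (r i).coeff (m i - 1) := by
  have hrest : DifferentiableOn ℂ
      (fun z => G z + ∑ j ∈ s.erase i, (r j).eval z / (z - β j) ^ m j)
      (closedBall (β i) R) := by
    refine hG.add (DifferentiableOn.fun_sum fun j hj => ?_)
    refine (r j).differentiable.differentiableOn.div
      ((differentiable_id.sub_const _).pow _).differentiableOn fun z hz => pow_ne_zero _ ?_
    rintro hzj
    rw [sub_eq_zero] at hzj
    exact hβ j (mem_of_mem_erase hj) (ne_of_mem_erase hj) (hzj ▸ hz)
  rw [← circleIntegral_add_eval_div_sub_pow hR hrest hr]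
  congr 1
  ext z
  rw [← add_sum_erase s _ hi]
  ring

theorem stmt9_general (r k : ℕ)
    (α : Fin r → ℂ) (hinj : Function.Injective α) (hroot : ∀ j, (α j) ^ r = 1)
    (U : Set ℂ)
    (h : ℂ → ℂ)
    (q : Polynomial ℂ) (hqdeg : q.natDegree < r * k)
    (h₁ : ℂ → ℂ) (hh₁ : ∀ z ∈ U, AnalyticAt ℂ h₁ z)
    (hdecomp : ∀ ζ ∈ U, h ζ - Polynomial.eval ζ q = (1 - ζ ^ r) ^ k * h₁ ζ)
    (η : ℂ) (hη : η ^ r ≠ 1)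
    (ρ : Fin r → ℝ) (hρ : ∀ j, 0 < ρ j)
    (hdisj : ∀ j j', j ≠ j' →
      Disjoint (Metric.closedBall (α j) (ρ j)) (Metric.closedBall (α j') (ρ j')))
    (hsub : ∀ j, Metric.closedBall (α j) (ρ j) ⊆ U)
    (hout : ∀ j, η ∉ Metric.closedBall (α j) (ρ j)) :
    ∑ j : Fin r, (1 / (2 * (Real.pi : ℂ) * Complex.I)) *
        (∮ ζ in C(α j, ρ j), h ζ / ((1 - ζ ^ r) ^ k * (ζ - η))) =
      -(Polynomial.eval η q) / (1 - η ^ r) ^ k := by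
  obtain ⟨pf, hpf, hsum, hpf_eval⟩ :=
    exists_partialFractions_div_one_sub_pow_mul_sub hinj hroot hη k hqdeg
  have hres : ∀ j, (∮ ζ in C(α j, ρ j), h ζ / ((1 - ζ ^ r) ^ k * (ζ - η))) =
      2 * π * I * (pf j).coeff (k - 1) := fun j => by
    set A := q.eval η / (1 - η ^ r) ^ k
    have hG : DifferentiableOn ℂ (fun z => (h₁ z + A) / (z - η)) (closedBall (α j) (ρ j)) :=
      fun z hz => (((hh₁ z (hsub j hz)).differentiableAt.add_const A).div
        (differentiableAt_id.sub_const η)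
        (sub_ne_zero.2 fun hzη => hout j (hzη ▸ hz))).differentiableWithinAt
    have hpoles : ∀ l ∈ univ, l ≠ j → α l ∉ closedBall (α j) (ρ j) := fun l _ hl hl' =>
      Set.disjoint_left.1 (hdisj j l hl.symm) hl' (mem_closedBall_self (hρ l).le)
    rw [← circleIntegral_add_sum_eval_div_sub_pow (m := fun _ => k) (r := pf) (mem_univ j) (hρ j)
      hG hpoles (hpf j)]
    refine circleIntegral.integral_congr (hρ j).le fun z hz => ?_
    have hzball := sphere_subset_closedBall hz
    have hzη : z ≠ η := fun hzη => hout j (hzη ▸ hzball)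
    have hzr : z ^ r ≠ 1 := by
      refine pow_ne_one_of_forall_ne (by rintro rfl; exact hη (pow_zero η)) hinj hroot fun l => ?_
      rcases eq_or_ne l j with rfl | hl
      · exact ne_of_mem_sphere hz (hρ l).ne'
      · exact fun hzl => hpoles l (mem_univ l) hl (hzl ▸ hzball)
    have hh : h z = q.eval z + (1 - z ^ r) ^ k * h₁ z := by
      linear_combination hdecomp z (hsub j hzball)
    rw [hh, add_div, hpf_eval z hzη hzr,
      mul_div_mul_left _ _ (pow_ne_zero _ (sub_ne_zero.2 hzr.symm))]
    ring
  simp only [hres, one_div, inv_mul_cancel_left₀ two_pi_I_ne_zero, hsum, neg_div]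

/-- residue formula for the principal part: let α_1,…,α_r enumerate the
r-th roots of unity, contained in an open set U, let h be analytic on U, and let q be
the polynomial of degree < rk with h − q = (1−ζ^r)^k·h₁ for an analytic h₁ on U.
Then for η with η^r ≠ 1 and radii ρ_j > 0 whose closed disks are pairwise disjoint,
contained in U and avoiding η, the sum of the circle integrals
(1/2πi)∮_{|ζ−α_j|=ρ_j} h(ζ)/((1−ζ^r)^k(ζ−η)) dζ equals −q(η)/(1−η^r)^k. -/
theorem stmt9 (r k : ℕ) (hr : 1 ≤ r) (hk : 1 ≤ k)
    (α : Fin r → ℂ) (hinj : Function.Injective α) (hroot : ∀ j, (α j) ^ r = 1)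
    (U : Set ℂ) (hU : IsOpen U) (hUα : ∀ j, α j ∈ U)
    (h : ℂ → ℂ) (hh : ∀ z ∈ U, AnalyticAt ℂ h z)
    (q : Polynomial ℂ) (hqdeg : q.natDegree < r * k)
    (h₁ : ℂ → ℂ) (hh₁ : ∀ z ∈ U, AnalyticAt ℂ h₁ z)
    (hdecomp : ∀ ζ ∈ U, h ζ - Polynomial.eval ζ q = (1 - ζ ^ r) ^ k * h₁ ζ)
    (η : ℂ) (hη : η ^ r ≠ 1)
    (ρ : Fin r → ℝ) (hρ : ∀ j, 0 < ρ j)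
    (hdisj : ∀ j j', j ≠ j' →
      Disjoint (Metric.closedBall (α j) (ρ j)) (Metric.closedBall (α j') (ρ j')))
    (hsub : ∀ j, Metric.closedBall (α j) (ρ j) ⊆ U)
    (hout : ∀ j, η ∉ Metric.closedBall (α j) (ρ j)) :
    ∑ j : Fin r, (1 / (2 * (Real.pi : ℂ) * Complex.I)) *
        (∮ ζ in C(α j, ρ j), h ζ / ((1 - ζ ^ r) ^ k * (ζ - η))) =
      -(Polynomial.eval η q) / (1 - η ^ r) ^ k :=
  stmt9_general r k α hinj hroot U h q hqdeg h₁ hh₁ hdecomp η hη ρ hρ hdisj hsub hout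
end

section
/- For every integer r ≥ 1 there exists ε > 0 such that for all z ∈ ℂ with |z| < ε, writing x = z·exp(−z^r): (i) for every integer k with 1 ≤ k ≤ r−1, the series Σ_{m=0}^∞ ((rm+k)^{m−1}/m!)·x^{rm+k} converges absolutely and equals z^k/k; (ii) the series Σ_{m=1}^∞ ((rm)^{m−1}/m!)·x^{rm} converges absolutely and equals z^r. -/
open Finset Polynomial
open scoped Nat

/-!
Put `w = z ^ r`. Since `(z * exp (-w)) ^ (r * m + k) = z ^ k * w ^ m * exp (-(r * m + k) * w)`,
part (i) is the identity `∑ₘ (r m + k) ^ (m - 1) / m! * w ^ m * exp (-(r m + k) w) = 1 / k`.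
Expanding each exponential gives an absolutely convergent double series; its terms with
`m + n = N` add up to `w ^ N / N!` times the `N`-th finite difference of the polynomial
`i ↦ (r i + k) ^ (N - 1)` of degree `N - 1`, which vanishes for `N ≥ 1`. Part (ii) is `r` times
the case `k = r` of (i).
-/

theorem sum_range_neg_one_pow_mul_choose_mul_pow_eq_zero {R : Type*} [CommRing R] (a b : R)
    {j N : ℕ} (h : j < N) :
    ∑ i ∈ range (N + 1), (-1 : R) ^ (N - i) * N.choose i * (a * i + b) ^ j = 0 := by
  have hdeg : ((C a * X + C b) ^ j).natDegree < N :=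
    (natDegree_pow_le_of_le j natDegree_linear_le).trans_lt (by omega)
  have := congr_fun (fwdDiff_iter_eq_zero_of_degree_lt hdeg) 0
  rw [fwdDiff_iter_eq_sum_shift] at this
  simpa using this

theorem zpow_sub_one_div_factorial_mul_pow_div_factorial {K : Type*} [Field K] [CharZero K]
    {x : K} (hx : x ≠ 0) (w : K) {i N : ℕ} (hi : i ≤ N) (hN : N ≠ 0) :
    x ^ ((i : ℤ) - 1) / i ! * w ^ i * ((-x * w) ^ (N - i) / (N - i)!) =
      w ^ N / N ! * ((-1) ^ (N - i) * N.choose i * x ^ (N - 1)) := by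
  have hxpow : x ^ ((i : ℤ) - 1) * x ^ (N - i) = x ^ (N - 1) := by
    rw [← zpow_natCast x (N - i), ← zpow_add₀ hx, ← zpow_natCast]
    congr 1
    omega
  have hwpow : w ^ i * w ^ (N - i) = w ^ N := by rw [← pow_add, Nat.add_sub_cancel' hi]
  have hfac : (N.choose i : K) * i ! * (N - i)! = N ! := by
    exact_mod_cast Nat.choose_mul_factorial_mul_factorial hi
  have hchoose : (N.choose i : K) ≠ 0 := by exact_mod_cast (Nat.choose_pos hi).ne'
  rw [← hfac, neg_mul, neg_pow, mul_pow, ← hxpow, ← hwpow]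
  field_simp

theorem Summable.hasSum_of_hasSum_sum_antidiagonal {E : Type*} [AddCommGroup E]
    [TopologicalSpace E] [IsTopologicalAddGroup E] [T3Space E]
    {F : ℕ × ℕ → E} {f : ℕ → E} {S : E} (hF : Summable F)
    (hrow : ∀ m, HasSum (fun n ↦ F (m, n)) (f m))
    (hdiag : HasSum (fun N ↦ ∑ p ∈ antidiagonal N, F p) S) : HasSum f S := by
  have hsigma : HasSum (fun N ↦ ∑ p ∈ antidiagonal N, F p) (∑' p, F p) :=
    ((HasAntidiagonal.sigmaAntidiagonalEquivProd.hasSum_iff).2 hF.hasSum).sigma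
      fun N ↦ (antidiagonal N).hasSum _
  exact hdiag.unique hsigma ▸ hF.hasSum.prod_fiberwise hrow

theorem mul_exp_neg_pow_pow_mul_add (z : ℂ) (r m k : ℕ) :
    (z * Complex.exp (-z ^ r)) ^ (r * m + k) =
      z ^ k * ((z ^ r) ^ m * Complex.exp (-((r * m + k : ℕ) : ℂ) * z ^ r)) := by
  rw [mul_pow, ← Complex.exp_nat_mul, pow_add, pow_mul]
  ring_nf

noncomputable def lambertCoeff (r k m : ℕ) : ℂ := ((r * m + k : ℕ) : ℂ) ^ ((m : ℤ) - 1) / m !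

section
variable (r : ℕ) {k : ℕ} (hk : k ≠ 0)
include hk

theorem norm_lambertCoeff_le (m : ℕ) : ‖lambertCoeff r k m‖ ≤ Real.exp (r * m + k) := by
  have hx : (1 : ℝ) ≤ (r * m + k : ℕ) := by exact_mod_cast (show 1 ≤ r * m + k by omega)
  calc ‖lambertCoeff r k m‖ = ((r * m + k : ℕ) : ℝ) ^ ((m : ℤ) - 1) / m ! := by
        simp only [lambertCoeff, norm_div, norm_zpow, Complex.norm_natCast]
    _ ≤ ((r * m + k : ℕ) : ℝ) ^ m / m ! := by
        gcongr
        exact_mod_cast zpow_le_zpow_right₀ hx (show (m : ℤ) - 1 ≤ m by omega)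
    _ ≤ Real.exp (r * m + k) := by
        simpa using Real.pow_div_factorial_le_exp _ (Nat.cast_nonneg (r * m + k)) m

theorem summable_lambertCoeff_majorant {w : ℂ} (hw : ‖w‖ * Real.exp (r * (1 + ‖w‖)) < 1) :
    Summable fun m : ℕ ↦ ‖lambertCoeff r k m * w ^ m‖ * Real.exp ((r * m + k : ℕ) * ‖w‖) := by
  have hgeom := (summable_geometric_of_lt_one (by positivity) hw).mul_left
    (Real.exp (k * (1 + ‖w‖)))
  refine hgeom.of_nonneg_of_le (fun m ↦ by positivity) fun m ↦ ?_
  calc ‖lambertCoeff r k m * w ^ m‖ * Real.exp ((r * m + k : ℕ) * ‖w‖)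
      ≤ Real.exp (r * m + k) * ‖w‖ ^ m * Real.exp ((r * m + k : ℕ) * ‖w‖) := by
        rw [norm_mul, norm_pow]
        gcongr
        exact norm_lambertCoeff_le r hk m
    _ = Real.exp (k * (1 + ‖w‖)) * (‖w‖ * Real.exp (r * (1 + ‖w‖))) ^ m := by
        have hexp : Real.exp (r * m + k) * Real.exp ((r * m + k : ℕ) * ‖w‖) =
            Real.exp (k * (1 + ‖w‖)) * Real.exp (r * (1 + ‖w‖)) ^ m := by
          rw [← Real.exp_nat_mul, ← Real.exp_add, ← Real.exp_add]
          push_cast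
          ring_nf
        linear_combination ‖w‖ ^ m * hexp

theorem sum_antidiagonal_lambertCoeff_eq_zero (w : ℂ) {N : ℕ} (hN : N ≠ 0) :
    ∑ p ∈ antidiagonal N, lambertCoeff r k p.1 * w ^ p.1 *
      ((-((r * p.1 + k : ℕ) : ℂ) * w) ^ p.2 / p.2 !) = 0 := by
  rw [Nat.sum_antidiagonal_eq_sum_range_succ_mk]
  have hterm : ∀ i ∈ range (N + 1), lambertCoeff r k i * w ^ i *
      ((-((r * i + k : ℕ) : ℂ) * w) ^ (N - i) / (N - i)!) =
        w ^ N / N ! * ((-1) ^ (N - i) * N.choose i * ((r : ℂ) * i + k) ^ (N - 1)) := by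
    intro i hi
    rw [lambertCoeff, zpow_sub_one_div_factorial_mul_pow_div_factorial
      (Nat.cast_ne_zero.2 (by omega)) w (by simpa [Nat.lt_succ_iff] using hi) hN]
    push_cast
    rfl
  rw [sum_congr rfl hterm, ← mul_sum,
    sum_range_neg_one_pow_mul_choose_mul_pow_eq_zero _ _ (by omega), mul_zero]

theorem hasSum_lambertCoeff_mul_exp {w : ℂ} (hw : ‖w‖ * Real.exp (r * (1 + ‖w‖)) < 1) :
    HasSum (fun m : ℕ ↦ lambertCoeff r k m * w ^ m * Complex.exp (-((r * m + k : ℕ) : ℂ) * w))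
      (k : ℂ)⁻¹ := by
  set F : ℕ × ℕ → ℂ := fun p ↦ lambertCoeff r k p.1 * w ^ p.1 *
    ((-((r * p.1 + k : ℕ) : ℂ) * w) ^ p.2 / p.2 !)
  have hnorm_row : ∀ m, HasSum (fun n ↦ ‖F (m, n)‖)
      (‖lambertCoeff r k m * w ^ m‖ * Real.exp ((r * m + k : ℕ) * ‖w‖)) := by
    intro m
    have := (Real.exp_eq_exp_ℝ ▸ NormedSpace.expSeries_div_hasSum_exp
      (((r * m + k : ℕ) : ℝ) * ‖w‖)).mul_left ‖lambertCoeff r k m * w ^ m‖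
    simpa only [F, norm_mul, norm_div, norm_pow, norm_neg, Complex.norm_natCast] using this
  have hsummable : Summable F := by
    refine Summable.of_norm ((summable_prod_of_nonneg fun _ ↦ norm_nonneg _).2 ⟨?_, ?_⟩)
    · exact fun m ↦ (hnorm_row m).summable
    · simpa only [(hnorm_row _).tsum_eq] using summable_lambertCoeff_majorant r hk hw
  refine hsummable.hasSum_of_hasSum_sum_antidiagonal (fun m ↦ ?_) ?_
  · have hexp : HasSum (fun n ↦ (-((r * m + k : ℕ) : ℂ) * w) ^ n / n !)
        (Complex.exp (-((r * m + k : ℕ) : ℂ) * w)) := by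
      rw [Complex.exp_eq_exp_ℂ]
      exact NormedSpace.expSeries_div_hasSum_exp _
    exact hexp.mul_left (lambertCoeff r k m * w ^ m)
  · have hzero : ∑ p ∈ antidiagonal 0, F p = (k : ℂ)⁻¹ := by simp [F, lambertCoeff]
    rw [← hzero]
    exact hasSum_single 0 fun N hN ↦ sum_antidiagonal_lambertCoeff_eq_zero r hk w hN

theorem summable_norm_lambertCoeff_mul_exp {w : ℂ} (hw : ‖w‖ * Real.exp (r * (1 + ‖w‖)) < 1) :
    Summable fun m : ℕ ↦
      ‖lambertCoeff r k m * w ^ m * Complex.exp (-((r * m + k : ℕ) : ℂ) * w)‖ := by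
  refine (summable_lambertCoeff_majorant r hk hw).of_nonneg_of_le (fun _ ↦ norm_nonneg _)
    fun m ↦ ?_
  rw [norm_mul]
  gcongr
  refine (Complex.norm_exp_le_exp_norm _).trans_eq ?_
  rw [norm_mul, norm_neg, Complex.norm_natCast]

theorem summable_norm_and_hasSum_lambertCoeff_mul_pow {z : ℂ}
    (hz : ‖z ^ r‖ * Real.exp (r * (1 + ‖z ^ r‖)) < 1) :
    (Summable fun m : ℕ ↦ ‖lambertCoeff r k m * (z * Complex.exp (-z ^ r)) ^ (r * m + k)‖) ∧
      HasSum (fun m : ℕ ↦ lambertCoeff r k m * (z * Complex.exp (-z ^ r)) ^ (r * m + k))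
        (z ^ k / k) := by
  simp_rw [mul_exp_neg_pow_pow_mul_add, mul_left_comm (lambertCoeff r k _) (z ^ k),
    ← mul_assoc _ (_ ^ _), norm_mul _ (_ * _), div_eq_mul_inv]
  exact ⟨(summable_norm_lambertCoeff_mul_exp r hk hz).mul_left _,
    (hasSum_lambertCoeff_mul_exp r hk hz).mul_left _⟩

end

theorem natCast_mul_succ_pow_div_factorial_succ {r : ℕ} (hr : r ≠ 0) (m : ℕ) :
    ((r * (m + 1) : ℕ) : ℂ) ^ m / (m + 1)! = r * lambertCoeff r r m := by
  have hy : ((r * m + r : ℕ) : ℂ) ≠ 0 := Nat.cast_ne_zero.2 (by omega)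
  rw [lambertCoeff, mul_add_one, zpow_sub_one₀ hy, zpow_natCast, Nat.factorial_succ]
  push_cast
  field_simp

theorem summable_norm_and_hasSum_natCast_mul_succ_pow {r : ℕ} (hr : r ≠ 0) {z : ℂ}
    (hz : ‖z ^ r‖ * Real.exp (r * (1 + ‖z ^ r‖)) < 1) :
    (Summable fun m : ℕ ↦ ‖((r * (m + 1) : ℕ) : ℂ) ^ m / (m + 1)! *
        (z * Complex.exp (-z ^ r)) ^ (r * (m + 1))‖) ∧
      HasSum (fun m : ℕ ↦ ((r * (m + 1) : ℕ) : ℂ) ^ m / (m + 1)! *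
        (z * Complex.exp (-z ^ r)) ^ (r * (m + 1))) (z ^ r) := by
  obtain ⟨hnorm, hsum⟩ := summable_norm_and_hasSum_lambertCoeff_mul_pow r hr hz
  simp_rw [natCast_mul_succ_pow_div_factorial_succ hr, mul_add_one r, mul_assoc (r : ℂ),
    norm_mul (r : ℂ)]
  refine ⟨hnorm.mul_left _, ?_⟩
  simpa only [mul_div_cancel₀ _ (Nat.cast_ne_zero.2 hr : (r : ℂ) ≠ 0)] using hsum.mul_left (r : ℂ)

theorem exists_pos_norm_pow_mul_exp_lt_one {r : ℕ} (hr : r ≠ 0) :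
    ∃ ε > (0 : ℝ), ∀ z : ℂ, ‖z‖ < ε → ‖z ^ r‖ * Real.exp (r * (1 + ‖z ^ r‖)) < 1 := by
  have hcont : Continuous fun z : ℂ ↦ ‖z ^ r‖ * Real.exp (r * (1 + ‖z ^ r‖)) := by fun_prop
  have hzero : ‖(0 : ℂ) ^ r‖ * Real.exp (r * (1 + ‖(0 : ℂ) ^ r‖)) < 1 := by simp [zero_pow hr]
  obtain ⟨ε, hε, hball⟩ :=
    Metric.eventually_nhds_iff.1 (hcont.continuousAt.eventually_lt continuousAt_const hzero)
  exact ⟨ε, hε, fun z hz ↦ hball (by simpa using hz)⟩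

/-- for every r ≥ 1 there is ε > 0 such that for ‖z‖ < ε, with
x = z·exp(−z^r): (i) for 1 ≤ k ≤ r−1 the series Σ_{m≥0} ((rm+k)^{m−1}/m!)·x^{rm+k}
converges absolutely to z^k/k; (ii) Σ_{m≥1} ((rm)^{m−1}/m!)·x^{rm} converges absolutely
to z^r. -/
theorem stmt12 (r : ℕ) (hr : 1 ≤ r) :
    ∃ ε > (0 : ℝ), ∀ z : ℂ, ‖z‖ < ε →
      (∀ k : ℕ, 1 ≤ k → k ≤ r - 1 →
        (Summable fun m : ℕ =>
          ‖((r * m + k : ℕ) : ℂ) ^ ((m : ℤ) - 1) / (Nat.factorial m : ℂ) *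
            (z * Complex.exp (-z ^ r)) ^ (r * m + k)‖) ∧
        HasSum (fun m : ℕ =>
          ((r * m + k : ℕ) : ℂ) ^ ((m : ℤ) - 1) / (Nat.factorial m : ℂ) *
            (z * Complex.exp (-z ^ r)) ^ (r * m + k)) (z ^ k / (k : ℂ))) ∧
      (Summable fun m : ℕ =>
        ‖((r * (m + 1) : ℕ) : ℂ) ^ m / (Nat.factorial (m + 1) : ℂ) *
          (z * Complex.exp (-z ^ r)) ^ (r * (m + 1))‖) ∧
      HasSum (fun m : ℕ =>
        ((r * (m + 1) : ℕ) : ℂ) ^ m / (Nat.factorial (m + 1) : ℂ) *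
          (z * Complex.exp (-z ^ r)) ^ (r * (m + 1))) (z ^ r) := by
  have hr0 : r ≠ 0 := by omega
  obtain ⟨ε, hε, hsmall⟩ := exists_pos_norm_pow_mul_exp_lt_one hr0
  refine ⟨ε, hε, fun z hz ↦ ⟨fun k hk _ ↦ ?_, ?_⟩⟩
  · exact summable_norm_and_hasSum_lambertCoeff_mul_pow r (by omega) (hsmall z hz)
  · exact summable_norm_and_hasSum_natCast_mul_succ_pow hr0 (hsmall z hz)
end

section
/- For every α ∈ ℂ and every x ∈ ℂ with |x| < e^{−1}, exp(α·y(x)) = 1 + Σ_{m=1}^∞ (α·(m+α)^{m−1}/m!)·x^m, where y(x) = Σ_{m=1}^∞ (m^{m−1}/m!)·x^m; in particular the series on the right converges absolutely for |x| < e^{−1}. -/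
/-!
Let `G(x) = ∑ gₘ xᵐ` be the series on the right-hand side (with `g₀ = 1`). Comparing coefficients,
the differential equation `G' = α y' G` is exactly Abel's identity
`∑ₖ C(n,k) x(x+k)^(k-1) (t-k)^(n-k) = (t+x)ⁿ` at `x = α`, `t = n + 1`. Abel's identity follows by
induction on `n`: both sides have derivative `n` times the previous case in `t`, and at `t = -x`
the left side is `x` times an `n`-th finite difference of a polynomial of degree `n - 1`.
Since `mᵐ/m! ≤ eᵐ`, the coefficients of `y` and `G` are `O(eᵐ)`, so both series may be
differentiated termwise on `|x| < e⁻¹`; there `exp(-α y) G` has derivative zero, hence equals its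
value `1` at the origin.
-/

/-- The coefficients of the tree function y(x) = Σ_{m≥1} (m^{m−1}/m!)·x^m. -/
noncomputable def treeCoeff (m : ℕ) : ℂ :=
  if m = 0 then 0 else (m : ℂ) ^ (m - 1) / (Nat.factorial m : ℂ)

open Finset
open scoped Nat

section Abel

open Polynomial

variable {R : Type*} [CommRing R]

/-- `abelWeight x k = x (x + k)^(k-1)`, with the value `1` at `k = 0`. -/
def abelWeight (x : R) : ℕ → R
  | 0 => 1
  | k + 1 => x * ((k : R) + 1 + x) ^ k

lemma abelWeight_mul_pow (x : R) {k n : ℕ} (hk : k ≤ n + 1) :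
    abelWeight x k * (x + k) ^ (n + 1 - k) = x * (x + k) ^ n := by
  cases k with
  | zero => simpa [abelWeight] using pow_succ' x n
  | succ j =>
    have hbase : (j : R) + 1 + x = x + (j + 1 : ℕ) := by push_cast; ring
    rw [abelWeight, hbase, mul_assoc, ← pow_add, show j + (n + 1 - (j + 1)) = n by omega]

lemma sum_choose_mul_abelWeight_mul_neg_pow (x : R) (n : ℕ) :
    ∑ k ∈ range (n + 2), ((n + 1).choose k * abelWeight x k) * (-x - k) ^ (n + 1 - k) = 0 := by
  have hΔ := congrFun (fwdDiff_iter_pow_eq_zero_of_lt (R := R) (Nat.lt_succ_self n)) x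
  rw [fwdDiff_iter_eq_sum_shift] at hΔ
  calc _ = x * ∑ k ∈ range (n + 2),
          ((-1 : ℤ) ^ (n + 1 - k) * (n + 1).choose k) • (x + k • (1 : R)) ^ n := by
        rw [mul_sum]
        refine sum_congr rfl fun k hk => ?_
        have hpow := abelWeight_mul_pow x (mem_range_succ_iff.1 hk)
        rw [show -x - (k : R) = -1 * (x + k) by ring, mul_pow, zsmul_eq_mul, nsmul_one]
        push_cast
        generalize (n + 1).choose k = c
        generalize n + 1 - k = e at *
        linear_combination ((-1) ^ e * (c : R)) * hpow
    _ = 0 := by rw [hΔ, Pi.zero_apply, mul_zero]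

lemma derivative_C_choose_mul_X_sub_pow (a c : R) (n k : ℕ) :
    derivative (C ((n + 1).choose k * a) * (X - C c) ^ (n + 1 - k)) =
      C ((n + 1 : ℕ) : R) * (C (n.choose k * a) * (X - C c) ^ (n - k)) := by
  rw [derivative_C_mul, derivative_X_sub_C_pow, ← mul_assoc, ← C_mul, ← mul_assoc, ← C_mul,
    show n + 1 - k - 1 = n - k by omega]
  congr 2
  have hchoose := congrArg (Nat.cast (R := R)) (Nat.choose_mul_succ_eq n k)
  push_cast at hchoose ⊢
  linear_combination a * hchoose.symm

variable [IsAddTorsionFree R]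

theorem sum_choose_mul_abelWeight_mul_X_sub_pow (x : R) (n : ℕ) :
    ∑ k ∈ range (n + 1), C (n.choose k * abelWeight x k) * (X - C (k : R)) ^ (n - k) =
      (X + C x) ^ n := by
  induction n with
  | zero => simp [abelWeight]
  | succ n ih =>
    set P := ∑ k ∈ range (n + 2),
      C ((n + 1).choose k * abelWeight x k) * (X - C (k : R)) ^ (n + 1 - k)
    have hderiv : derivative (P - (X + C x) ^ (n + 1)) = 0 := by
      rw [derivative_sub, derivative_X_add_C_pow, derivative_sum]
      simp_rw [derivative_C_choose_mul_X_sub_pow, ← mul_sum, sum_range_succ _ (n + 1),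
        Nat.choose_succ_self, ih]
      simp
    have hroot : (P - (X + C x) ^ (n + 1)).eval (-x) = 0 := by
      simp [P, eval_finsetSum, sum_choose_mul_abelWeight_mul_neg_pow]
    rw [eq_C_of_derivative_eq_zero hderiv, eval_C] at hroot
    rw [← sub_eq_zero, eq_C_of_derivative_eq_zero hderiv, hroot, map_zero]

theorem sum_choose_mul_abelWeight_mul_sub_pow (x t : R) (n : ℕ) :
    ∑ k ∈ range (n + 1), n.choose k * abelWeight x k * (t - k) ^ (n - k) = (t + x) ^ n := by
  simpa [eval_finsetSum, mul_assoc] using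
    congrArg (eval t) (sum_choose_mul_abelWeight_mul_X_sub_pow x n)

end Abel

noncomputable def expTreeCoeff (α : ℂ) (m : ℕ) : ℂ := abelWeight α m / (m ! : ℂ)

lemma succ_mul_treeCoeff_succ (i : ℕ) :
    ((i : ℂ) + 1) * treeCoeff (i + 1) = ((i : ℂ) + 1) ^ i / (i ! : ℂ) := by
  rw [treeCoeff, if_neg i.succ_ne_zero, Nat.add_sub_cancel, Nat.factorial_succ]
  push_cast
  field_simp

/-- The coefficientwise form of `G' = α y' G`. -/
lemma succ_mul_expTreeCoeff_succ (α : ℂ) (n : ℕ) :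
    ((n : ℂ) + 1) * expTreeCoeff α (n + 1) =
      α * ∑ ij ∈ antidiagonal n, ((ij.1 : ℂ) + 1) * treeCoeff (ij.1 + 1) * expTreeCoeff α ij.2 := by
  rw [← Nat.sum_antidiagonal_swap]
  simp only [Prod.fst_swap, Prod.snd_swap]
  rw [Nat.sum_antidiagonal_eq_sum_range_succ
    (fun j i => ((i : ℂ) + 1) * treeCoeff (i + 1) * expTreeCoeff α j)]
  simp only [succ_mul_treeCoeff_succ, expTreeCoeff]
  have hterm : ∀ k ∈ range (n + 1),
      ((↑(n - k) : ℂ) + 1) ^ (n - k) / ((n - k)! : ℂ) * (abelWeight α k / (k ! : ℂ)) =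
        n.choose k * abelWeight α k * ((n : ℂ) + 1 - k) ^ (n - k) / (n ! : ℂ) := by
    intro k hk
    have hkn := mem_range_succ_iff.1 hk
    rw [Nat.cast_choose ℂ hkn, Nat.cast_sub hkn]
    have := n.factorial_ne_zero
    have := k.factorial_ne_zero
    have := (n - k).factorial_ne_zero
    field_simp
    ring
  rw [sum_congr rfl hterm, ← sum_div, sum_choose_mul_abelWeight_mul_sub_pow, abelWeight,
    Nat.factorial_succ]
  push_cast
  field_simp

section PowerSeries

variable {𝕜 : Type*} [RCLike 𝕜] {c : ℕ → 𝕜} {ρ C : ℝ} {z : 𝕜}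

lemma summable_norm_mul_pow_of_bound (hc : ∀ m, ‖c m‖ * ρ ^ m ≤ C) (hz : ‖z‖ < ρ) :
    Summable fun m => ‖c m * z ^ m‖ := by
  have hρ : 0 < ρ := (norm_nonneg z).trans_lt hz
  have hq : ‖z‖ / ρ < 1 := (div_lt_one hρ).2 hz
  refine .of_nonneg_of_le (fun m => norm_nonneg _) (fun m => ?_)
    ((summable_geometric_of_lt_one (by positivity) hq).mul_left C)
  calc ‖c m * z ^ m‖ = ‖c m‖ * ρ ^ m * (‖z‖ / ρ) ^ m := by
        rw [norm_mul, norm_pow, div_pow]; field_simp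
    _ ≤ C * (‖z‖ / ρ) ^ m := by gcongr; exact hc m

lemma summable_norm_succ_mul_mul_pow_of_bound (hc : ∀ m, ‖c m‖ * ρ ^ m ≤ C) (hz : ‖z‖ < ρ) :
    Summable fun m : ℕ => ‖((m : 𝕜) + 1) * c (m + 1) * z ^ m‖ := by
  have hρ : 0 < ρ := (norm_nonneg z).trans_lt hz
  have hq : ‖‖z‖ / ρ‖ < 1 := by
    rw [Real.norm_of_nonneg (by positivity)]; exact (div_lt_one hρ).2 hz
  have hgeom : Summable fun m : ℕ => ((m : ℝ) + 1) * (‖z‖ / ρ) ^ m := by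
    simpa [add_mul] using
      (summable_pow_mul_geometric_of_norm_lt_one 1 hq).add (summable_geometric_of_norm_lt_one hq)
  refine .of_nonneg_of_le (fun m => norm_nonneg _) (fun m => ?_) (hgeom.mul_left (C / ρ))
  calc ‖((m : 𝕜) + 1) * c (m + 1) * z ^ m‖
      = ‖c (m + 1)‖ * ρ ^ (m + 1) / ρ * ((m + 1) * (‖z‖ / ρ) ^ m) := by
        rw [norm_mul, norm_mul, norm_pow, div_pow, ← Nat.cast_succ, RCLike.norm_natCast]
        push_cast
        field_simp
        ring
    _ ≤ C / ρ * ((m + 1) * (‖z‖ / ρ) ^ m) := by gcongr; exact hc _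

lemma hasDerivAt_tsum_mul_pow_of_bound (hc : ∀ m, ‖c m‖ * ρ ^ m ≤ C) (hz : ‖z‖ < ρ) :
    HasDerivAt (fun w => ∑' m, c m * w ^ m) (∑' m : ℕ, ((m : 𝕜) + 1) * c (m + 1) * z ^ m) z := by
  obtain ⟨r, hzr, hrρ⟩ := exists_between hz
  have hr : ‖(r : 𝕜)‖ < ρ := by
    rwa [RCLike.norm_ofReal, abs_of_pos ((norm_nonneg z).trans_lt hzr)]
  have hu : Summable fun m => ‖c m * (m * (r : 𝕜) ^ (m - 1))‖ := by
    refine (summable_nat_add_iff 1).1 ?_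
    simpa [mul_comm, mul_left_comm] using summable_norm_succ_mul_mul_pow_of_bound hc hr
  refine (hasDerivAt_tsum_of_isPreconnected hu Metric.isOpen_ball
    (convex_ball (0 : 𝕜) r).isPreconnected (fun m w _ => (hasDerivAt_pow m w).const_mul (c m))
    (fun m w hw => ?_) (Metric.mem_ball_self ((norm_nonneg z).trans_lt hzr))
    (summable_norm_mul_pow_of_bound hc (by simpa using (norm_nonneg z).trans_lt hz)).of_norm
    (mem_ball_zero_iff.2 hzr)).congr_deriv ?_
  · have hwr : ‖w‖ ≤ r := (mem_ball_zero_iff.1 hw).le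
    simp only [norm_mul, norm_pow, RCLike.norm_natCast, RCLike.norm_ofReal,
      abs_of_pos ((norm_nonneg z).trans_lt hzr)]
    gcongr
  · rw [tsum_eq_zero_add' ?_, Nat.cast_zero, zero_mul, mul_zero, zero_add]
    · refine tsum_congr fun m => ?_
      rw [Nat.add_sub_cancel]
      push_cast
      ring
    · simpa [mul_comm, mul_left_comm, mul_assoc] using
        (summable_norm_succ_mul_mul_pow_of_bound hc hz).of_norm

lemma tsum_mul_pow_mul_tsum_mul_pow {a b : ℕ → 𝕜} (ha : Summable fun m => ‖a m * z ^ m‖)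
    (hb : Summable fun m => ‖b m * z ^ m‖) :
    (∑' m, a m * z ^ m) * (∑' m, b m * z ^ m) =
      ∑' n, (∑ ij ∈ antidiagonal n, a ij.1 * b ij.2) * z ^ n := by
  rw [tsum_mul_tsum_eq_tsum_sum_antidiagonal_of_summable_norm ha hb]
  refine tsum_congr fun n => ?_
  rw [sum_mul]
  refine sum_congr rfl fun ij hij => ?_
  rw [← mem_antidiagonal.1 hij, pow_add]
  ring

lemma tsum_mul_zero_pow (c : ℕ → 𝕜) : ∑' m, c m * 0 ^ m = c 0 := by
  rw [tsum_eq_single 0 fun m hm => by simp [hm], pow_zero, mul_one]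

end PowerSeries

theorem IsOpen.eq_exp_of_hasDerivAt_mul {s : Set ℂ} (hs : IsOpen s) (hs' : IsPreconnected s)
    {f g g' : ℂ → ℂ} (hg : ∀ z ∈ s, HasDerivAt g (g' z) z)
    (hf : ∀ z ∈ s, HasDerivAt f (g' z * f z) z) {z₀ z : ℂ} (hz₀ : z₀ ∈ s) (hz : z ∈ s)
    (h₀ : f z₀ = Complex.exp (g z₀)) : f z = Complex.exp (g z) := by
  have hderiv : ∀ w ∈ s, HasDerivAt (fun w => Complex.exp (-g w) * f w) 0 w := fun w hw =>
    ((hg w hw).fun_neg.cexp.fun_mul (hf w hw)).congr_deriv (by ring)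
  have hconst := hs.is_const_of_deriv_eq_zero hs'
    (fun w hw => (hderiv w hw).differentiableAt.differentiableWithinAt)
    (fun w hw => (hderiv w hw).deriv) hz hz₀
  rw [h₀, Complex.exp_neg, Complex.exp_neg, inv_mul_cancel₀ (Complex.exp_ne_zero _)] at hconst
  rwa [inv_mul_eq_one₀ (Complex.exp_ne_zero _), eq_comm] at hconst

section CoefficientBounds

open Real

lemma add_pow_div_factorial_mul_exp_neg_one_pow_le (m : ℕ) {a : ℝ} (ha : 0 ≤ a) :
    ((m : ℝ) + a) ^ m / m ! * exp (-1) ^ m ≤ exp a := by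
  calc ((m : ℝ) + a) ^ m / m ! * exp (-1) ^ m ≤ exp (m + a) * exp (-1) ^ m := by
        gcongr; exact Real.pow_div_factorial_le_exp _ (by positivity) m
    _ = exp a := by rw [← exp_nat_mul, ← exp_add]; congr 1; ring

lemma norm_treeCoeff_mul_exp_neg_one_pow_le (m : ℕ) : ‖treeCoeff m‖ * exp (-1) ^ m ≤ 1 := by
  rcases m.eq_zero_or_pos with rfl | hm
  · simp [treeCoeff]
  rw [treeCoeff, if_neg hm.ne', norm_div, norm_pow, Complex.norm_natCast, Complex.norm_natCast]
  calc (m : ℝ) ^ (m - 1) / m ! * exp (-1) ^ m ≤ ((m : ℝ) + 0) ^ m / m ! * exp (-1) ^ m := by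
        rw [add_zero]
        gcongr
        · exact_mod_cast hm
        · omega
    _ ≤ 1 := by simpa using add_pow_div_factorial_mul_exp_neg_one_pow_le m le_rfl

lemma norm_expTreeCoeff_mul_exp_neg_one_pow_le (α : ℂ) (m : ℕ) :
    ‖expTreeCoeff α m‖ * exp (-1) ^ m ≤ (1 + ‖α‖) * exp ‖α‖ := by
  have hα := norm_nonneg α
  cases m with
  | zero =>
    simp only [expTreeCoeff, abelWeight, Nat.factorial_zero, Nat.cast_one, div_one, norm_one,
      pow_zero, mul_one]
    nlinarith [one_le_exp hα]
  | succ s =>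
    have hb : ‖(s : ℂ) + 1 + α‖ ≤ ((s + 1 : ℕ) : ℝ) + ‖α‖ := by
      rw [← Complex.norm_natCast]
      push_cast
      exact norm_add_le _ _
    rw [expTreeCoeff, abelWeight, norm_div, norm_mul, norm_pow, Complex.norm_natCast]
    calc ‖α‖ * ‖(s : ℂ) + 1 + α‖ ^ s / ((s + 1)! : ℝ) * exp (-1) ^ (s + 1)
        ≤ ‖α‖ * (((s + 1 : ℕ) : ℝ) + ‖α‖) ^ (s + 1) / ((s + 1)! : ℝ) * exp (-1) ^ (s + 1) := by
          gcongr
          calc ‖(s : ℂ) + 1 + α‖ ^ s ≤ (((s + 1 : ℕ) : ℝ) + ‖α‖) ^ s := by gcongr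
            _ ≤ _ := pow_le_pow_right₀ (by push_cast; linarith) s.le_succ
      _ ≤ ‖α‖ * exp ‖α‖ := by
          rw [mul_div_assoc, mul_assoc]
          gcongr
          exact add_pow_div_factorial_mul_exp_neg_one_pow_le _ hα
      _ ≤ (1 + ‖α‖) * exp ‖α‖ := by gcongr; linarith

end CoefficientBounds

theorem exp_mul_tsum_treeCoeff_mul_pow (α : ℂ) {x : ℂ} (hx : ‖x‖ < Real.exp (-1)) :
    Complex.exp (α * ∑' m, treeCoeff m * x ^ m) = ∑' m, expTreeCoeff α m * x ^ m := by
  have hY := norm_treeCoeff_mul_exp_neg_one_pow_le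
  have hG := norm_expTreeCoeff_mul_exp_neg_one_pow_le α
  symm
  refine Metric.isOpen_ball.eq_exp_of_hasDerivAt_mul (convex_ball 0 _).isPreconnected
    (f := fun z => ∑' m, expTreeCoeff α m * z ^ m) (g := fun z => α * ∑' m, treeCoeff m * z ^ m)
    (g' := fun z => α * ∑' m : ℕ, ((m : ℂ) + 1) * treeCoeff (m + 1) * z ^ m)
    (fun z hz => (hasDerivAt_tsum_mul_pow_of_bound hY (mem_ball_zero_iff.1 hz)).const_mul α)
    (fun z hz => ?_) (Metric.mem_ball_self (Real.exp_pos _)) (mem_ball_zero_iff.2 hx) ?_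
  · have hz := mem_ball_zero_iff.1 hz
    refine (hasDerivAt_tsum_mul_pow_of_bound hG hz).congr_deriv ?_
    rw [mul_assoc, tsum_mul_pow_mul_tsum_mul_pow (summable_norm_succ_mul_mul_pow_of_bound hY hz)
      (summable_norm_mul_pow_of_bound hG hz), ← tsum_mul_left]
    exact tsum_congr fun n => by rw [succ_mul_expTreeCoeff_succ]; ring
  · rw [tsum_mul_zero_pow, tsum_mul_zero_pow]
    simp [expTreeCoeff, abelWeight, treeCoeff]

/-- for every α ∈ ℂ and ‖x‖ < e^{−1},
exp(α·y(x)) = 1 + Σ_{m≥1} (α·(m+α)^{m−1}/m!)·x^m, the series converging absolutely,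
where y(x) = Σ_{m≥1} (m^{m−1}/m!)·x^m.  (The sum on the right is written with the
index shifted by one: the summand for m corresponds to the original index m+1.) -/
theorem stmt15 (α : ℂ) (x : ℂ) (hx : ‖x‖ < Real.exp (-1)) :
    (Summable fun m : ℕ =>
      ‖α * (((m : ℂ) + 1) + α) ^ m / (Nat.factorial (m + 1) : ℂ) * x ^ (m + 1)‖) ∧
    Complex.exp (α * ∑' m : ℕ, treeCoeff m * x ^ m) =
      1 + ∑' m : ℕ,
        α * (((m : ℂ) + 1) + α) ^ m / (Nat.factorial (m + 1) : ℂ) * x ^ (m + 1) := by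
  have hsum := summable_norm_mul_pow_of_bound (norm_expTreeCoeff_mul_exp_neg_one_pow_le α) hx
  refine ⟨(summable_nat_add_iff 1).2 hsum, ?_⟩
  rw [exp_mul_tsum_treeCoeff_mul_pow α hx, hsum.of_norm.tsum_eq_zero_add]
  congr 1
  simp [expTreeCoeff, abelWeight]
end

section
/- For all positive integers μ and r and every integer s, the following identity of rational numbers holds: ⟨−μs/r⟩ + ⟨μ(s+1)/r⟩ + δ_{r ∣ μs} + δ_{r ∣ μ(s+1)} + ⌊μ/r + ⟨μs/r⟩ − gcd(μ,r)/r⌋ = 1 + μ/r, where ⌊q⌋ is the floor and ⟨q⟩ = q − ⌊q⌋ the fractional part of a rational number q, and δ_{r ∣ a} equals 1 if r divides a and 0 otherwise. -/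
/-!
Write `y = μs/r` and `z = μ(s+1)/r`, so that `z - y = μ/r`. The indicator terms are exactly what
turns the fractional parts into ceiling expressions: `⟨-y⟩ + δ = 1 - ⟨y⟩` and
`⟨z⟩ + δ = z + 1 - ⌈z⌉`. Since `gcd(μ, r)` divides both `μ(s+1)` and `r`, shifting `μ(s+1)` down
by it behaves like shifting an integer down by one before dividing, so
`⌊μ/r + ⟨y⟩ - gcd(μ,r)/r⌋ = ⌊z - gcd(μ,r)/r⌋ - ⌊y⌋ = ⌈z⌉ - 1 - ⌊y⌋`. Everything then telescopes to
`1 + z - y = 1 + μ/r`.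
-/

namespace Int

variable {α : Type*} [Field α] [LinearOrder α] [IsStrictOrderedRing α] [FloorRing α]

theorem fract_neg_add_ite_fract_eq_zero (q : α) :
    fract (-q) + (if fract q = 0 then 1 else 0) = 1 - fract q := by
  by_cases hq : fract q = 0
  · simp [hq]
  · simp [hq, fract_neg hq]

theorem fract_add_ite_fract_eq_zero (q : α) :
    fract q + (if fract q = 0 then 1 else 0) = q + 1 - ⌈q⌉ := by
  by_cases hq : fract q = 0
  · rw [hq, if_pos rfl, (ceil_eq_self_iff_mem q).mpr (fract_eq_zero_iff.mp hq)]
    ring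
  · rw [if_neg hq, ceil_eq_add_one_sub_fract hq]
    ring

theorem dvd_iff_fract_div_eq_zero {n d : ℤ} (hd : d ≠ 0) :
    d ∣ n ↔ fract ((n : α) / d) = 0 := by
  have hd' : (d : α) ≠ 0 := by exact_mod_cast hd
  rw [fract_eq_zero_iff]
  constructor
  · rintro ⟨k, rfl⟩
    exact ⟨k, by push_cast; field_simp⟩
  · rintro ⟨k, hk⟩
    refine ⟨k, ?_⟩
    rw [eq_div_iff hd'] at hk
    exact_mod_cast hk.symm.trans (mul_comm _ _)

/-- `n` and `d * k` are both multiples of `g`, so they are never closer than `g`. -/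
theorem floor_sub_div_eq_ceil_sub_one {n d g : ℤ} (hd : 0 < d) (hg : 0 < g) (hgn : g ∣ n)
    (hgd : g ∣ d) : ⌊((n - g : ℤ) : α) / d⌋ = ⌈(n : α) / d⌉ - 1 := by
  have hd' : (0 : α) < d := by exact_mod_cast hd
  set c := ⌈(n : α) / d⌉
  have hlt : d * (c - 1) < n := by
    have : ((c - 1 : ℤ) : α) < n / d := by push_cast; linarith [ceil_lt_add_one ((n : α) / d)]
    rw [lt_div_iff₀ hd'] at this
    exact_mod_cast (mul_comm _ _).trans_lt this
  have hle : g ≤ n - d * (c - 1) := le_of_dvd (by omega) (dvd_sub hgn (hgd.mul_right _))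
  rw [floor_eq_iff]
  constructor
  · rw [le_div_iff₀ hd']
    exact_mod_cast (by linarith : (c - 1) * d ≤ n - g)
  · have : ((n - g : ℤ) : α) / d < n / d := by
      gcongr
      exact sub_lt_self _ (by exact_mod_cast hg)
    push_cast at this ⊢
    linarith [le_ceil ((n : α) / d)]

end Int

theorem stmt18_general (μ r : ℕ) (hr : 0 < r) (s : ℤ) :
    Int.fract (-(μ : ℚ) * (s : ℚ) / (r : ℚ)) + Int.fract ((μ : ℚ) * ((s : ℚ) + 1) / (r : ℚ)) +
      (if (r : ℤ) ∣ (μ : ℤ) * s then (1 : ℚ) else 0) +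
      (if (r : ℤ) ∣ (μ : ℤ) * (s + 1) then (1 : ℚ) else 0) +
      ((⌊(μ : ℚ) / (r : ℚ) + Int.fract ((μ : ℚ) * (s : ℚ) / (r : ℚ)) -
          (Nat.gcd μ r : ℚ) / (r : ℚ)⌋ : ℤ) : ℚ) =
      1 + (μ : ℚ) / (r : ℚ) := by
  set y : ℚ := μ * s / r
  set z : ℚ := μ * (s + 1) / r
  have hr' : (r : ℤ) ≠ 0 := by positivity
  have hdvd_y : (r : ℤ) ∣ μ * s ↔ Int.fract y = 0 := by
    rw [Int.dvd_iff_fract_div_eq_zero (α := ℚ) hr']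
    push_cast
    rfl
  have hdvd_z : (r : ℤ) ∣ μ * (s + 1) ↔ Int.fract z = 0 := by
    rw [Int.dvd_iff_fract_div_eq_zero (α := ℚ) hr']
    push_cast
    rfl
  have hfloor : ⌊(μ : ℚ) / r + Int.fract y - (Nat.gcd μ r : ℚ) / r⌋ = ⌈z⌉ - 1 - ⌊y⌋ := by
    have hg : (Nat.gcd μ r : ℤ) ∣ μ * (s + 1) :=
      (Int.natCast_dvd_natCast.mpr (Nat.gcd_dvd_left μ r)).mul_right _
    have hshift := Int.floor_sub_div_eq_ceil_sub_one (α := ℚ) (by positivity) (by positivity) hg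
      (Int.natCast_dvd_natCast.mpr (Nat.gcd_dvd_right μ r))
    rw [← Int.self_sub_floor, show (μ : ℚ) / r + (y - ⌊y⌋) - (Nat.gcd μ r : ℚ) / r
      = ((μ * (s + 1) - Nat.gcd μ r : ℤ) : ℚ) / (r : ℤ) - ⌊y⌋ by push_cast; ring,
      Int.floor_sub_intCast, hshift]
    push_cast
    rfl
  rw [show -(μ : ℚ) * s / r = -y by ring, hfloor]
  simp only [hdvd_y, hdvd_z]
  have hzy : z - y = μ / r := by ring
  push_cast
  linear_combination Int.fract_neg_add_ite_fract_eq_zero y + Int.fract_add_ite_fract_eq_zero z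
    + hzy - Int.fract_add_floor y

/-- For all positive integers μ, r and every integer s,
⟨−μs/r⟩ + ⟨μ(s+1)/r⟩ + δ_{r∣μs} + δ_{r∣μ(s+1)} + ⌊μ/r + ⟨μs/r⟩ − gcd(μ,r)/r⌋ = 1 + μ/r,
where ⌊·⌋ is the floor, ⟨·⟩ the fractional part, and δ the divisibility indicator. -/
theorem stmt18 (μ r : ℕ) (hμ : 0 < μ) (hr : 0 < r) (s : ℤ) :
    Int.fract (-(μ : ℚ) * (s : ℚ) / (r : ℚ)) + Int.fract ((μ : ℚ) * ((s : ℚ) + 1) / (r : ℚ)) +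
      (if (r : ℤ) ∣ (μ : ℤ) * s then (1 : ℚ) else 0) +
      (if (r : ℤ) ∣ (μ : ℤ) * (s + 1) then (1 : ℚ) else 0) +
      ((⌊(μ : ℚ) / (r : ℚ) + Int.fract ((μ : ℚ) * (s : ℚ) / (r : ℚ)) -
          (Nat.gcd μ r : ℚ) / (r : ℚ)⌋ : ℤ) : ℚ) =
      1 + (μ : ℚ) / (r : ℚ) :=
  stmt18_general μ r hr s
end
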